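/- arXiv:1506.01803 — 13 statements merged into one kernel-verified Lean document; each statement's English description precedes it below -/
import Mathlib

section
/- Let X be a real Hilbert space, F : X → X monotone and hemicontinuous, y ∈ X, and assume the solution set L = {x ∈ X : F(x) = y} is nonempty. Let (δ_n) be a sequence of positive numbers with δ_n → 0, let (α_n) be positive numbers with α_n → 0 and δ_n/α_n → 0, let y_n ∈ X with ‖y − y_n‖ ≤ δ_n, and let x_n ∈ X satisfy F(x_n) + α_n(x_n − x̄) = y_n for a fixed x̄ ∈ X. Then there is a unique x̄-minimum-norm solution x†_min ∈ L, and x_n converges strongly (in norm) to x†_min as n → ∞. -/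
open RealInnerProductSpace Filter

set_option maxHeartbeats 1000000

private lemma aux_sq {r E q : ℝ} (hE : 0 ≤ E) (hq : 0 ≤ q) (hr : 0 ≤ r)
    (h : r ^ 2 ≤ 2 * E * r + q ^ 2) : r ≤ 2 * E + q := by
  nlinarith [mul_nonneg hE hq, mul_nonneg hE hr, sq_nonneg (r - q)]

/-- Minty's trick: a monotone hemicontinuous operator satisfying the variational
inequality at `z0` actually solves the equation at `z0`. -/
private lemma minty {X : Type*} [NormedAddCommGroup X] [InnerProductSpace ℝ X]
    (F : X → X)
    (hhemi : ∀ x v w : X, ContinuousOn (fun t : ℝ => ⟪F (x + t • v), w⟫) (Set.Icc 0 1))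
    (y z0 : X) (h : ∀ z : X, 0 ≤ ⟪F z - y, z - z0⟫) : F z0 = y := by
  have key : ∀ v : X, 0 ≤ ⟪F z0 - y, v⟫ := by
    intro v
    have hc : ContinuousWithinAt (fun t : ℝ => ⟪F (z0 + t • v), v⟫) (Set.Icc 0 1) 0 :=
      (hhemi z0 v v).continuousWithinAt (by simp)
    have hne : (nhdsWithin (0:ℝ) (Set.Ioc 0 1)).NeBot := by
      rw [← mem_closure_iff_nhdsWithin_neBot, closure_Ioc (one_ne_zero).symm]
      exact Set.left_mem_Icc.2 zero_le_one
    have h2 : Tendsto (fun t : ℝ => ⟪F (z0 + t • v), v⟫) (nhdsWithin 0 (Set.Ioc 0 1))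
        (nhds ⟪F z0, v⟫) := by
      have := hc.tendsto
      simp only [zero_smul, add_zero] at this
      exact this.mono_left (nhdsWithin_mono _ Set.Ioc_subset_Icc_self)
    have hev : ∀ᶠ t in nhdsWithin (0:ℝ) (Set.Ioc 0 1), ⟪y, v⟫ ≤ ⟪F (z0 + t • v), v⟫ := by
      filter_upwards [self_mem_nhdsWithin] with t ht
      have h0 := h (z0 + t • v)
      have hzz : z0 + t • v - z0 = t • v := by abel
      rw [hzz, real_inner_smul_right, inner_sub_left] at h0
      have h1 := (mul_nonneg_iff_of_pos_left ht.1).mp h0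
      linarith
    have := ge_of_tendsto h2 hev
    rw [inner_sub_left]
    linarith
  have h0 := key (y - F z0)
  have h1 : ⟪F z0 - y, y - F z0⟫ = -‖F z0 - y‖ ^ 2 := by
    rw [show y - F z0 = -(F z0 - y) by abel, inner_neg_right, real_inner_self_eq_norm_sq]
  rw [h1] at h0
  have : ‖F z0 - y‖ = 0 := by nlinarith [sq_nonneg ‖F z0 - y‖, norm_nonneg (F z0 - y)]
  have := norm_eq_zero.mp this
  rw [sub_eq_zero] at this
  exact this

/-- Convergence of Lavrentiev regularized solutions with an a priori parameter choice:
if δₙ → 0, αₙ → 0 and δₙ/αₙ → 0, the regularized solutions converge strongly to the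
unique x̄-minimum-norm solution. -/
theorem stmt_4 {X : Type*} [NormedAddCommGroup X] [InnerProductSpace ℝ X] [CompleteSpace X]
    (F : X → X) (hmono : ∀ x x' : X, 0 ≤ ⟪F x - F x', x - x'⟫)
    (hhemi : ∀ x v w : X, ContinuousOn (fun t : ℝ => ⟪F (x + t • v), w⟫) (Set.Icc 0 1))
    (y xbar : X) (L : Set X) (hLdef : L = {x : X | F x = y}) (hLne : L.Nonempty)
    (δ α : ℕ → ℝ) (hδpos : ∀ n, 0 < δ n) (hαpos : ∀ n, 0 < α n)
    (hδ0 : Tendsto δ atTop (nhds 0))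
    (hα0 : Tendsto α atTop (nhds 0))
    (hratio : Tendsto (fun n => δ n / α n) atTop (nhds 0))
    (yn xn : ℕ → X) (hnoise : ∀ n, ‖y - yn n‖ ≤ δ n)
    (hlav : ∀ n, F (xn n) + α n • (xn n - xbar) = yn n) :
    ∃ xmin ∈ L, (∀ x ∈ L, ‖xmin - xbar‖ ≤ ‖x - xbar‖) ∧
      (∀ x' ∈ L, (∀ x ∈ L, ‖x' - xbar‖ ≤ ‖x - xbar‖) → x' = xmin) ∧
      Tendsto xn atTop (nhds xmin) := by
  subst hLdef
  set ε : ℕ → ℝ := fun n => δ n / α n with hεdef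
  have hεnn : ∀ n, 0 ≤ ε n := fun n => le_of_lt (div_pos (hδpos n) (hαpos n))
  have hF : ∀ n, F (xn n) = yn n - α n • (xn n - xbar) := fun n => eq_sub_of_add_eq (hlav n)
  -- Step 1: key variational inequality for solutions
  have key1 : ∀ (x : X), F x = y → ∀ n, ⟪xn n - xbar, xn n - x⟫ ≤ ε n * ‖xn n - x‖ := by
    intro x hx n
    have h0 := hmono (xn n) x
    rw [hF n, hx] at h0
    have hexp : ⟪yn n - α n • (xn n - xbar) - y, xn n - x⟫
        = ⟪yn n - y, xn n - x⟫ - α n * ⟪xn n - xbar, xn n - x⟫ := by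
      simp [inner_sub_left, real_inner_smul_left]
      ring
    rw [hexp] at h0
    have h1 : ⟪yn n - y, xn n - x⟫ ≤ δ n * ‖xn n - x‖ := by
      calc ⟪yn n - y, xn n - x⟫ ≤ ‖yn n - y‖ * ‖xn n - x‖ := real_inner_le_norm _ _
        _ ≤ δ n * ‖xn n - x‖ := by
            apply mul_le_mul_of_nonneg_right _ (norm_nonneg _)
            rw [norm_sub_rev]; exact hnoise n
    have h2 : α n * ⟪xn n - xbar, xn n - x⟫ ≤ δ n * ‖xn n - x‖ := by linarith
    rw [hεdef]
    rw [div_mul_eq_mul_div, le_div_iff₀ (hαpos n)]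
    linarith [h2]
  -- Step 2: a priori bound
  have bound2 : ∀ (x : X), F x = y → ∀ n, ‖xn n - xbar‖ ≤ ‖x - xbar‖ + 2 * ε n := by
    intro x hx n
    have hN : ‖xn n - x‖ ≤ ‖xn n - xbar‖ + ‖x - xbar‖ := by
      calc ‖xn n - x‖ = ‖(xn n - xbar) - (x - xbar)‖ := by rw [sub_sub_sub_cancel_right]
        _ ≤ ‖xn n - xbar‖ + ‖x - xbar‖ := norm_sub_le _ _
    have hsq : ‖xn n - xbar‖ ^ 2 = ⟪xn n - xbar, xn n - x⟫ + ⟪xn n - xbar, x - xbar⟫ := by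
      rw [← inner_add_right, sub_add_sub_cancel, real_inner_self_eq_norm_sq]
    have h2 : ⟪xn n - xbar, x - xbar⟫ ≤ ‖xn n - xbar‖ * ‖x - xbar‖ := real_inner_le_norm _ _
    have h1 := key1 x hx n
    have ht0 : (0:ℝ) ≤ ‖xn n - xbar‖ := norm_nonneg _
    have hb0 : (0:ℝ) ≤ ‖x - xbar‖ := norm_nonneg _
    have hε0 := hεnn n
    nlinarith [mul_le_mul_of_nonneg_left hN hε0]
  -- Step 3: Cauchy-type estimate
  have cauchy3 : ∀ n m, ‖xn n - xn m‖ ≤ 2 * max (ε n) (ε m)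
      + Real.sqrt |‖xn n - xbar‖ ^ 2 - ‖xn m - xbar‖ ^ 2| := by
    intro n m
    set u := xn n - xbar with hu
    set v := xn m - xbar with hv
    have heq : xn n - xn m = u - v := by rw [hu, hv, sub_sub_sub_cancel_right]
    have h0 := hmono (xn n) (xn m)
    rw [hF n, hF m, heq] at h0
    have hexp : ⟪yn n - α n • u - (yn m - α m • v), u - v⟫
        = ⟪yn n - yn m, u - v⟫ - (α n * ⟪u, u - v⟫ - α m * ⟪v, u - v⟫) := by
      simp [inner_sub_left, real_inner_smul_left]
      ring
    rw [hexp] at h0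
    have hyn : ⟪yn n - yn m, u - v⟫ ≤ (δ n + δ m) * ‖u - v‖ := by
      calc ⟪yn n - yn m, u - v⟫ ≤ ‖yn n - yn m‖ * ‖u - v‖ := real_inner_le_norm _ _
        _ ≤ (δ n + δ m) * ‖u - v‖ := by
            apply mul_le_mul_of_nonneg_right _ (norm_nonneg _)
            calc ‖yn n - yn m‖ = ‖(yn n - y) + (y - yn m)‖ := by rw [sub_add_sub_cancel]
              _ ≤ ‖yn n - y‖ + ‖y - yn m‖ := norm_add_le _ _
              _ ≤ δ n + δ m := by
                  have := hnoise n; rw [norm_sub_rev] at this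
                  exact add_le_add this (hnoise m)
    have hkey : α n * ⟪u, u - v⟫ - α m * ⟪v, u - v⟫ ≤ (δ n + δ m) * ‖u - v‖ := by linarith
    -- scalar bookkeeping
    have hA : ⟪u, u - v⟫ = ‖u‖ ^ 2 - ⟪u, v⟫ := by
      rw [inner_sub_right, real_inner_self_eq_norm_sq]
    have hB : ⟪v, u - v⟫ = ⟪u, v⟫ - ‖v‖ ^ 2 := by
      rw [inner_sub_right, real_inner_self_eq_norm_sq, real_inner_comm]
    have hs : ‖u - v‖ ^ 2 = ‖u‖ ^ 2 - 2 * ⟪u, v⟫ + ‖v‖ ^ 2 := norm_sub_sq_real u v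
    set s := ‖u - v‖ with hsd
    set E := max (ε n) (ε m) with hE
    set D := |‖u‖ ^ 2 - ‖v‖ ^ 2| with hD
    have hEnn : 0 ≤ E := le_trans (hεnn n) (le_max_left _ _)
    have hδn : δ n ≤ E * α n := by
      have : ε n ≤ E := le_max_left _ _
      have := mul_le_mul_of_nonneg_right this (le_of_lt (hαpos n))
      rwa [hεdef, div_mul_cancel₀] at this
      exact ne_of_gt (hαpos n)
    have hδm : δ m ≤ E * α m := by
      have : ε m ≤ E := le_max_right _ _
      have := mul_le_mul_of_nonneg_right this (le_of_lt (hαpos m))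
      rwa [hεdef, div_mul_cancel₀] at this
      exact ne_of_gt (hαpos m)
    have hD1 : ‖u‖ ^ 2 - ‖v‖ ^ 2 ≤ D := le_abs_self _
    have hD2 : -D ≤ ‖u‖ ^ 2 - ‖v‖ ^ 2 := neg_abs_le _
    have hαn := hαpos n
    have hαm := hαpos m
    have hsnn : 0 ≤ s := norm_nonneg _
    have hsum : 0 < α n + α m := by linarith
    have hmain : s ^ 2 ≤ 2 * E * s + D := by
      have h3 : (α n + α m) * s ^ 2 ≤ (α n + α m) * (2 * E * s + D) := by
        nlinarith [hkey, hA, hB, hs, hδn, hδm, hD1, hD2, mul_nonneg hEnn hsnn]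
      exact le_of_mul_le_mul_left h3 hsum
    have hq2 : Real.sqrt D ^ 2 = D := Real.sq_sqrt (abs_nonneg _)
    have := aux_sq hEnn (Real.sqrt_nonneg D) hsnn (by rw [hq2]; exact hmain)
    rw [heq]
    exact this
  -- auxiliary convergences
  have hynto : Tendsto yn atTop (nhds y) := by
    rw [tendsto_iff_norm_sub_tendsto_zero]
    apply squeeze_zero (fun n => norm_nonneg _) (fun n => ?_) hδ0
    rw [norm_sub_rev]; exact hnoise n
  -- Step 4: main subsequence machine
  have hsub : ∀ ψ : ℕ → ℕ, Tendsto ψ atTop atTop →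
      (∃ a, Tendsto (fun k => ‖xn (ψ k) - xbar‖) atTop (nhds a)) →
      ∃ x', F x' = y ∧ (∀ x : X, F x = y → ‖x' - xbar‖ ≤ ‖x - xbar‖) ∧
        Tendsto (fun k => xn (ψ k)) atTop (nhds x') := by
    rintro ψ hψ ⟨a, ha⟩
    have hεψ : Tendsto (fun k => ε (ψ k)) atTop (nhds 0) := hratio.comp hψ
    have hαψ : Tendsto (fun k => α (ψ k)) atTop (nhds 0) := hα0.comp hψ
    have hynψ : Tendsto (fun k => yn (ψ k)) atTop (nhds y) := hynto.comp hψ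
    -- Cauchy
    have hca : CauchySeq (fun k => xn (ψ k)) := by
      rw [Metric.cauchySeq_iff]
      intro η hη
      have h8 : (0:ℝ) < η / 8 := by linarith
      have h4 : (0:ℝ) < η / 4 := by linarith
      have hev1 : ∀ᶠ k in atTop, ε (ψ k) < η / 8 :=
        hεψ.eventually (gt_mem_nhds h8)
      have hsq : CauchySeq (fun k => ‖xn (ψ k) - xbar‖ ^ 2) := (ha.pow 2).cauchySeq
      rw [Metric.cauchySeq_iff] at hsq
      obtain ⟨N2, hN2⟩ := hsq ((η / 4) ^ 2) (by positivity)
      obtain ⟨N1, hN1⟩ := eventually_atTop.mp hev1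
      refine ⟨max N1 N2, fun j hj k hk => ?_⟩
      have hj1 := le_trans (le_max_left _ _) hj
      have hk1 := le_trans (le_max_left _ _) hk
      have hj2 := le_trans (le_max_right _ _) hj
      have hk2 := le_trans (le_max_right _ _) hk
      have hc := cauchy3 (ψ j) (ψ k)
      have hmax : max (ε (ψ j)) (ε (ψ k)) < η / 8 := max_lt (hN1 j hj1) (hN1 k hk1)
      have hd := hN2 j hj2 k hk2
      rw [Real.dist_eq] at hd
      have hsqrt : Real.sqrt |‖xn (ψ j) - xbar‖ ^ 2 - ‖xn (ψ k) - xbar‖ ^ 2| < η / 4 :=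
        (Real.sqrt_lt' h4).mpr hd
      rw [dist_eq_norm]
      calc ‖xn (ψ j) - xn (ψ k)‖
          ≤ 2 * max (ε (ψ j)) (ε (ψ k)) + Real.sqrt |‖xn (ψ j) - xbar‖ ^ 2 - ‖xn (ψ k) - xbar‖ ^ 2| := hc
        _ < 2 * (η / 8) + η / 4 := by linarith
        _ < η := by linarith
    obtain ⟨x', hx'⟩ := cauchySeq_tendsto_of_complete hca
    -- the limit solves the equation (Minty)
    have hx'L : F x' = y := by
      apply minty F hhemi y x'
      intro z
      have hg : ∀ k, 0 ≤ ⟪F z - (yn (ψ k) - α (ψ k) • (xn (ψ k) - xbar)), z - xn (ψ k)⟫ := by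
        intro k
        have := hmono z (xn (ψ k))
        rwa [hF (ψ k)] at this
      have hsm : Tendsto (fun k => α (ψ k) • (xn (ψ k) - xbar)) atTop (nhds 0) := by
        have := hαψ.smul (hx'.sub (tendsto_const_nhds (x := xbar)))
        simpa using this
      have hvec : Tendsto (fun k => F z - (yn (ψ k) - α (ψ k) • (xn (ψ k) - xbar))) atTop
          (nhds (F z - y)) := by
        have := (tendsto_const_nhds (x := F z)).sub (hynψ.sub hsm)
        simpa using this
      have hvec2 : Tendsto (fun k => z - xn (ψ k)) atTop (nhds (z - x')) :=
        (tendsto_const_nhds (x := z)).sub hx'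
      exact ge_of_tendsto' (hvec.inner hvec2) hg
    -- minimality
    refine ⟨x', hx'L, fun x hx => ?_, hx'⟩
    have hb : ∀ k, ‖xn (ψ k) - xbar‖ ≤ ‖x - xbar‖ + 2 * ε (ψ k) := fun k => bound2 x hx (ψ k)
    have hl : Tendsto (fun k => ‖xn (ψ k) - xbar‖) atTop (nhds ‖x' - xbar‖) :=
      ((hx'.sub tendsto_const_nhds).norm)
    have hr : Tendsto (fun k => ‖x - xbar‖ + 2 * ε (ψ k)) atTop (nhds ‖x - xbar‖) := by
      have := (tendsto_const_nhds (x := ‖x - xbar‖)).add ((hεψ.const_mul 2))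
      simpa using this
    exact le_of_tendsto_of_tendsto' hl hr hb
  -- boundedness for Bolzano–Weierstrass
  obtain ⟨x0, hx0⟩ := hLne
  have hx0y : F x0 = y := hx0
  obtain ⟨C, hC⟩ : ∃ C, ∀ n, ε n ≤ C := by
    obtain ⟨C, hC⟩ := hratio.bddAbove_range
    exact ⟨C, fun n => hC (Set.mem_range_self n)⟩
  have htmem : ∀ n, ‖xn n - xbar‖ ∈ Set.Icc (0:ℝ) (‖x0 - xbar‖ + 2 * C) := by
    intro n
    refine ⟨norm_nonneg _, le_trans (bound2 x0 hx0y n) ?_⟩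
    have := hC n
    linarith
  have hbw : ∀ ns : ℕ → ℕ, ∃ ms : ℕ → ℕ, StrictMono ms ∧
      ∃ a, Tendsto (fun k => ‖xn (ns (ms k)) - xbar‖) atTop (nhds a) := by
    intro ns
    obtain ⟨a, -, ms, hms, hto⟩ := tendsto_subseq_of_bounded
      (Metric.isBounded_Icc (0:ℝ) (‖x0 - xbar‖ + 2 * C)) (fun k => htmem (ns k))
    exact ⟨ms, hms, a, hto⟩
  -- get the minimum-norm solution
  obtain ⟨ms, hms, a, hto⟩ := hbw id
  obtain ⟨xmin, hminL, hminmin, hmintend⟩ := hsub ms hms.tendsto_atTop ⟨a, hto⟩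
  -- uniqueness
  have huniq : ∀ x' : X, F x' = y → (∀ x : X, F x = y → ‖x' - xbar‖ ≤ ‖x - xbar‖) →
      x' = xmin := by
    intro x' hx'L hx'min
    have hd1 : ‖x' - xbar‖ ≤ ‖xmin - xbar‖ := hx'min xmin hminL
    have hd2 : ‖xmin - xbar‖ ≤ ‖x' - xbar‖ := hminmin x' hx'L
    have hdd : ‖x' - xbar‖ = ‖xmin - xbar‖ := le_antisymm hd1 hd2
    set m := (1/2 : ℝ) • (x' + xmin) with hm
    have hmL : F m = y := by
      apply minty F hhemi y m
      intro z
      have h1 : 0 ≤ ⟪F z - y, z - x'⟫ := by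
        have := hmono z x'; rwa [hx'L] at this
      have h2 : 0 ≤ ⟪F z - y, z - xmin⟫ := by
        have := hmono z xmin; rwa [hminL] at this
      have hzm : z - m = (1/2 : ℝ) • ((z - x') + (z - xmin)) := by
        rw [hm]
        rw [smul_add, smul_add, smul_sub, smul_sub]
        module
      rw [hzm, real_inner_smul_right, inner_add_right]
      nlinarith
    have hge : ‖xmin - xbar‖ ≤ ‖m - xbar‖ := hminmin m hmL
    have hpar : ‖(x' - xbar) + (xmin - xbar)‖ ^ 2 + ‖(x' - xbar) - (xmin - xbar)‖ ^ 2
        = 2 * (‖x' - xbar‖ ^ 2 + ‖xmin - xbar‖ ^ 2) := by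
      have := parallelogram_law_with_norm ℝ (x' - xbar) (xmin - xbar)
      linarith [this]
    have hmx : m - xbar = (1/2 : ℝ) • ((x' - xbar) + (xmin - xbar)) := by
      rw [hm]; module
    have hnm : ‖m - xbar‖ = (1/2) * ‖(x' - xbar) + (xmin - xbar)‖ := by
      rw [hmx, norm_smul]
      simp
    have hxx : x' - xmin = (x' - xbar) - (xmin - xbar) := by abel
    have : ‖x' - xmin‖ ^ 2 ≤ 0 := by
      rw [hxx]
      nlinarith [hge, hnm, hpar, hdd, norm_nonneg (m - xbar), norm_nonneg (xmin - xbar)]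
    have : ‖x' - xmin‖ = 0 := by nlinarith [norm_nonneg (x' - xmin)]
    rw [norm_eq_zero, sub_eq_zero] at this
    exact this
  -- full convergence
  have htends : Tendsto xn atTop (nhds xmin) := by
    apply tendsto_of_subseq_tendsto
    intro ns hns
    obtain ⟨ms2, hms2, a2, hto2⟩ := hbw ns
    obtain ⟨x'', hx''L, hx''min, hx''tend⟩ :=
      hsub (fun k => ns (ms2 k)) (hns.comp hms2.tendsto_atTop) ⟨a2, hto2⟩
    have : x'' = xmin := huniq x'' hx''L hx''min
    exact ⟨ms2, this ▸ hx''tend⟩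
  exact ⟨xmin, hminL, fun x hx => hminmin x hx, fun x' hx' hm => huniq x' hx' hm, htends⟩
end

section
/- Let X be a real Hilbert space, F : X → X monotone and hemicontinuous, y ∈ X, and assume the solution set L = {x ∈ X : F(x) = y} is nonempty. Let (δ_n) be a sequence of positive numbers with δ_n → 0, let (α_n) be positive numbers with δ_n/α_n → 0, let y_n ∈ X with ‖y − y_n‖ ≤ δ_n, and let x_n ∈ X satisfy F(x_n) + α_n(x_n − x̄) = y_n for a fixed x̄ ∈ X. If in addition ‖F(x_n) − y‖ → 0 as n → ∞, then there is a unique x̄-minimum-norm solution x†_min ∈ L, and x_n converges strongly (in norm) to x†_min as n → ∞. -/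
/-!
Monotonicity and the Lavrentiev equation give, for every solution `x`,
`⟪xₙ - x̄, xₙ - x⟫ ≤ (δₙ/αₙ) ‖xₙ - x‖`. Taking `x = x†` (the projection of `x̄` onto the closed
convex solution set) this bounds `(xₙ)` and gives
`‖xₙ - x†‖² ≤ ⟪x† - x̄, x† - xₙ⟫ + (δₙ/αₙ) ‖xₙ - x†‖`. Weak cluster points of `(xₙ)` are
solutions, by Minty's lemma and `F(xₙ) → y`, so the variational inequality characterising `x†`
forces `limsup ⟪x† - x̄, x† - xₙ⟫ ≤ 0`, whence `xₙ → x†` in norm.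
-/

open RealInnerProductSpace Filter Topology

section

variable {X : Type*} [NormedAddCommGroup X] [InnerProductSpace ℝ X]

theorem IsMinOn.inner_sub_nonpos {K : Set X} (hK : Convex ℝ K) {u a : X} (ha : a ∈ K)
    (hmin : IsMinOn (‖· - u‖) K a) : ∀ w ∈ K, ⟪u - a, w - a⟫ ≤ 0 := by
  refine (norm_eq_iInf_iff_real_inner_le_zero hK ha).mp ?_
  simp_rw [norm_sub_rev u]
  exact (hmin.iInf_eq ha).symm

theorem IsMinOn.eq_of_isMinOn_norm_sub {K : Set X} (hK : Convex ℝ K) {u a b : X} (ha : a ∈ K)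
    (hb : b ∈ K) (hamin : IsMinOn (‖· - u‖) K a) (hbmin : IsMinOn (‖· - u‖) K b) : a = b := by
  have hab := hamin.inner_sub_nonpos hK ha b hb
  have hba := hbmin.inner_sub_nonpos hK hb a ha
  have hsum : ⟪b - a, b - a⟫ = ⟪u - a, b - a⟫ + ⟪u - b, a - b⟫ := by
    rw [← neg_sub b a, inner_neg_right, ← sub_eq_add_neg, ← inner_sub_left,
      sub_sub_sub_cancel_left]
  exact (sub_eq_zero.mp (real_inner_self_nonpos.mp (by linarith))).symm

theorem exists_isMinOn_norm_sub {K : Set X} (hne : K.Nonempty) (hK : IsComplete K)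
    (hKc : Convex ℝ K) (u : X) : ∃ a ∈ K, IsMinOn (‖· - u‖) K a := by
  obtain ⟨a, ha, heq⟩ := exists_norm_eq_iInf_of_complete_convex hne hK hKc u
  refine ⟨a, ha, fun x hx => ?_⟩
  change ‖a - u‖ ≤ ‖x - u‖
  rw [norm_sub_rev, heq, norm_sub_rev x]
  exact ciInf_le ⟨0, Set.forall_mem_range.2 fun _ => norm_nonneg _⟩ (⟨x, hx⟩ : K)

theorem exists_forall_mapClusterPt_inner [CompleteSpace X] {ι : Type*} {l : Filter ι} [l.NeBot]
    {u : ι → X} {C : ℝ} (hu : ∀ᶠ i in l, ‖u i‖ ≤ C) :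
    ∃ z : X, ∀ w : X, MapClusterPt ⟪z, w⟫ l (fun i => ⟪u i, w⟫) := by
  -- Banach–Alaoglu in the dual, transported back to `X` by the Riesz isomorphism.
  let Φ : ι → WeakDual ℝ X := fun i => StrongDual.toWeakDual (InnerProductSpace.toDual ℝ X (u i))
  have hΦ : map Φ l ≤ 𝓟 (WeakDual.toStrongDual ⁻¹' Metric.closedBall 0 C) := by
    rw [le_principal_iff, mem_map]
    filter_upwards [hu] with i hi
    simpa [Φ] using hi
  obtain ⟨ψ, -, hψ⟩ := WeakDual.isCompact_closedBall 0 C hΦ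
  refine ⟨(InnerProductSpace.toDual ℝ X).symm (WeakDual.toStrongDual ψ), fun w => ?_⟩
  have := MapClusterPt.continuousAt_comp (WeakDual.eval_continuous w).continuousAt
    (show MapClusterPt ψ l Φ from hψ)
  simpa [Φ, Function.comp_def] using this

section InnerSubLe

variable {p a u : X} {ε : ℝ}

theorem norm_sub_sq_le_of_inner_sub_le (h : ⟪p - u, p - a⟫ ≤ ε * ‖p - a‖) :
    ‖p - a‖ ^ 2 ≤ ⟪a - u, a - p⟫ + ε * ‖p - a‖ := by
  have : ⟪p - u, p - a⟫ = ‖p - a‖ ^ 2 - ⟪a - u, a - p⟫ := by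
    rw [← sub_add_sub_cancel p a u, inner_add_left, real_inner_self_eq_norm_sq, ← neg_sub a p,
      inner_neg_right]
    ring
  linarith

theorem norm_sub_le_of_inner_sub_le (hε : 0 ≤ ε) (h : ⟪p - u, p - a⟫ ≤ ε * ‖p - a‖) :
    ‖p - a‖ ≤ ‖a - u‖ + ε := by
  have hcs : ⟪a - u, a - p⟫ ≤ ‖a - u‖ * ‖p - a‖ :=
    (real_inner_le_norm _ _).trans_eq (by rw [norm_sub_rev a p])
  nlinarith [norm_sub_sq_le_of_inner_sub_le h, norm_nonneg (p - a), norm_nonneg (a - u)]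

end InnerSubLe

section InnerSubLeSeq

variable {ι : Type*} {l : Filter ι} {p : ι → X} {a u : X} {ε : ι → ℝ}

theorem eventually_norm_le_of_inner_sub_le (hε0 : ∀ i, 0 ≤ ε i) (hε : Tendsto ε l (𝓝 0))
    (hp : ∀ i, ⟪p i - u, p i - a⟫ ≤ ε i * ‖p i - a‖) :
    ∀ᶠ i in l, ‖p i‖ ≤ ‖a‖ + ‖a - u‖ + 1 := by
  filter_upwards [hε.eventually (gt_mem_nhds one_pos)] with i hi
  linarith [norm_le_norm_add_norm_sub' (p i) a, norm_sub_le_of_inner_sub_le (hε0 i) (hp i)]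

theorem tendsto_of_inner_sub_le (hε0 : ∀ i, 0 ≤ ε i) (hε : Tendsto ε l (𝓝 0))
    (hp : ∀ i, ⟪p i - u, p i - a⟫ ≤ ε i * ‖p i - a‖)
    (hlim : ∀ η > 0, ∀ᶠ i in l, ⟪a - u, a - p i⟫ < η) : Tendsto p l (𝓝 a) := by
  rw [tendsto_iff_norm_sub_tendsto_zero]
  refine tendsto_order.2 ⟨fun r hr => .of_forall fun i => hr.trans_le (norm_nonneg _),
    fun r hr => ?_⟩
  have hsmall : Tendsto (fun i => ε i * (‖a - u‖ + ε i)) l (𝓝 0) := by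
    simpa using hε.mul (tendsto_const_nhds.add hε)
  filter_upwards [hlim (r ^ 2 / 2) (by positivity),
    hsmall.eventually (gt_mem_nhds (by positivity : 0 < r ^ 2 / 2))] with i hnear hsmall_i
  have hle := mul_le_mul_of_nonneg_left (norm_sub_le_of_inner_sub_le (hε0 i) (hp i)) (hε0 i)
  exact lt_of_pow_lt_pow_left₀ 2 hr.le (by linarith [norm_sub_sq_le_of_inner_sub_le (hp i)])

end InnerSubLeSeq

def IsMonotoneOperator (F : X → X) : Prop :=
  ∀ x x' : X, 0 ≤ ⟪F x - F x', x - x'⟫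

def IsHemicontinuous (F : X → X) : Prop :=
  ∀ x v w : X, ContinuousOn (fun t : ℝ => ⟪F (x + t • v), w⟫) (Set.Icc 0 1)

theorem IsHemicontinuous.apply_eq_of_forall_inner_nonneg {F : X → X} (hF : IsHemicontinuous F)
    {y z : X} (h : ∀ v, 0 ≤ ⟪F v - y, v - z⟫) : F z = y := by
  have hdir : ∀ w, ⟪y, w⟫ ≤ ⟪F z, w⟫ := by
    intro w
    -- Minty's trick: test with `v = z + t • w` and let `t → 0⁺`.
    have hlim : Tendsto (fun t : ℝ => ⟪F (z + t • w), w⟫) (𝓝[>] 0) (𝓝 ⟪F z, w⟫) := by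
      simpa using ((hF z w w 0 ⟨le_rfl, zero_le_one⟩).mono Set.Ioc_subset_Icc_self).tendsto
    refine ge_of_tendsto hlim ?_
    filter_upwards [self_mem_nhdsWithin] with t ht
    have := h (z + t • w)
    rw [add_sub_cancel_left, real_inner_smul_right, inner_sub_left] at this
    linarith [nonneg_of_mul_nonneg_right this ht]
  have hself : ⟪y - F z, y - F z⟫ ≤ 0 := by
    rw [inner_sub_left]
    linarith [hdir (y - F z)]
  exact (sub_eq_zero.mp (real_inner_self_nonpos.mp hself)).symm

section MonotoneOperator

variable {F : X → X}

theorem setOf_apply_eq_eq_iInter (hmono : IsMonotoneOperator F) (hhemi : IsHemicontinuous F)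
    (y : X) : {x | F x = y} = ⋂ v, {x | ⟪F v - y, x⟫ ≤ ⟪F v - y, v⟫} := by
  ext x
  have hiff : ∀ v, ⟪F v - y, x⟫ ≤ ⟪F v - y, v⟫ ↔ 0 ≤ ⟪F v - y, v - x⟫ := fun v => by
    rw [inner_sub_right, sub_nonneg]
  simp only [Set.mem_ofPred_eq, Set.mem_iInter, hiff]
  refine ⟨fun hx v => ?_, hhemi.apply_eq_of_forall_inner_nonneg⟩
  rw [← hx]
  exact hmono v x

theorem isClosed_setOf_apply_eq (hmono : IsMonotoneOperator F) (hhemi : IsHemicontinuous F)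
    (y : X) : IsClosed {x | F x = y} := by
  rw [setOf_apply_eq_eq_iInter hmono hhemi]
  exact isClosed_iInter fun v => isClosed_le (continuous_const.inner continuous_id) continuous_const

theorem convex_setOf_apply_eq (hmono : IsMonotoneOperator F) (hhemi : IsHemicontinuous F)
    (y : X) : Convex ℝ {x | F x = y} := by
  rw [setOf_apply_eq_eq_iInter hmono hhemi]
  exact convex_iInter fun v => convex_halfSpace_le (innerₛₗ ℝ (F v - y)).isLinear _

theorem IsMonotoneOperator.apply_eq_of_forall_mapClusterPt_inner (hmono : IsMonotoneOperator F)
    (hhemi : IsHemicontinuous F) {ι : Type*} {l : Filter ι} {u : ι → X} {y z : X} {C : ℝ}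
    (hu : ∀ᶠ i in l, ‖u i‖ ≤ C) (hres : Tendsto (fun i => ‖F (u i) - y‖) l (𝓝 0))
    (hz : ∀ w, MapClusterPt ⟪z, w⟫ l (fun i => ⟪u i, w⟫)) : F z = y := by
  refine hhemi.apply_eq_of_forall_inner_nonneg fun v => ?_
  rw [inner_sub_right, sub_nonneg, real_inner_comm z, real_inner_comm v]
  refine le_of_forall_pos_le_add fun e he => isClosed_Iic.mem_of_mapClusterPt (hz (F v - y)) ?_
  have hsmall : ∀ᶠ i in l, ‖F (u i) - y‖ * (‖v‖ + C) < e := by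
    have := hres.mul_const (‖v‖ + C)
    rw [zero_mul] at this
    exact this.eventually (gt_mem_nhds he)
  filter_upwards [hu, hsmall] with i hi hie
  have hcs : -(‖F (u i) - y‖ * (‖v‖ + C)) ≤ ⟪F (u i) - y, v - u i⟫ :=
    neg_le_of_abs_le <| (abs_real_inner_le_norm _ _).trans <| mul_le_mul_of_nonneg_left
      ((norm_sub_le _ _).trans (by linarith)) (norm_nonneg _)
  have hsplit : ⟪F v - F (u i), v - u i⟫
      = ⟪v, F v - y⟫ - ⟪u i, F v - y⟫ - ⟪F (u i) - y, v - u i⟫ := by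
    simp only [inner_sub_left, inner_sub_right, real_inner_comm]
    ring
  rw [Set.mem_Iic]
  linarith [hmono v (u i)]

theorem IsMonotoneOperator.eventually_inner_sub_lt [CompleteSpace X] (hmono : IsMonotoneOperator F)
    (hhemi : IsHemicontinuous F) {ι : Type*} {l : Filter ι} {u : ι → X} {y a x₀ : X} {C : ℝ}
    (hu : ∀ᶠ i in l, ‖u i‖ ≤ C) (hres : Tendsto (fun i => ‖F (u i) - y‖) l (𝓝 0))
    (ha : ∀ w, F w = y → ⟪x₀ - a, w - a⟫ ≤ 0) {η : ℝ} (hη : 0 < η) :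
    ∀ᶠ i in l, ⟪a - x₀, a - u i⟫ < η := by
  -- Otherwise a weak cluster point along the bad indices solves `F z = y` but violates `ha`.
  by_contra hfreq
  let l' := l ⊓ 𝓟 {i | η ≤ ⟪a - x₀, a - u i⟫}
  have : l'.NeBot := by
    rw [not_eventually] at hfreq
    exact frequently_iff_neBot.mp (hfreq.mono fun i => le_of_not_gt)
  have hu' : ∀ᶠ i in l', ‖u i‖ ≤ C := hu.filter_mono inf_le_left
  obtain ⟨z, hz⟩ := exists_forall_mapClusterPt_inner hu'
  have hzy := hmono.apply_eq_of_forall_mapClusterPt_inner hhemi hu' (hres.mono_left inf_le_left) hz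
  have hfar : ⟪z, a - x₀⟫ ≤ ⟪a, a - x₀⟫ - η := by
    refine isClosed_Iic.mem_of_mapClusterPt (hz (a - x₀)) ?_
    filter_upwards [mem_inf_of_right (mem_principal_self _)] with i (hi : η ≤ ⟪a - x₀, a - u i⟫)
    rw [inner_sub_right, real_inner_comm a, real_inner_comm (u i)] at hi
    rw [Set.mem_Iic]
    linarith
  have hnear := ha z hzy
  rw [← neg_sub a x₀, inner_neg_left, inner_sub_right, real_inner_comm z,
    real_inner_comm a] at hnear
  linarith

theorem IsMonotoneOperator.inner_sub_le_of_lavrentiev (hmono : IsMonotoneOperator F)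
    {x x₀ xα y yδ : X} {α δ : ℝ} (hα : 0 < α) (hx : F x = y) (hnoise : ‖y - yδ‖ ≤ δ)
    (hlav : F xα + α • (xα - x₀) = yδ) : ⟪xα - x₀, xα - x⟫ ≤ δ / α * ‖xα - x‖ := by
  have hm := hmono xα x
  rw [hx, show F xα - y = (yδ - y) - α • (xα - x₀) by rw [← hlav]; abel, inner_sub_left,
    real_inner_smul_left] at hm
  have hcs : ⟪yδ - y, xα - x⟫ ≤ δ * ‖xα - x‖ := (real_inner_le_norm _ _).trans <|
    mul_le_mul_of_nonneg_right (by rwa [norm_sub_rev]) (norm_nonneg _)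
  rw [div_mul_eq_mul_div, le_div_iff₀ hα]
  linarith

end MonotoneOperator

end

theorem stmt_5_general {X : Type*} [NormedAddCommGroup X] [InnerProductSpace ℝ X] [CompleteSpace X]
    (F : X → X) (hmono : ∀ x x' : X, 0 ≤ ⟪F x - F x', x - x'⟫)
    (hhemi : ∀ x v w : X, ContinuousOn (fun t : ℝ => ⟪F (x + t • v), w⟫) (Set.Icc 0 1))
    (y xbar : X) (L : Set X) (hLdef : L = {x : X | F x = y}) (hLne : L.Nonempty)
    (δ α : ℕ → ℝ) (hαpos : ∀ n, 0 < α n)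
    (hratio : Tendsto (fun n => δ n / α n) atTop (nhds 0))
    (yn xn : ℕ → X) (hnoise : ∀ n, ‖y - yn n‖ ≤ δ n)
    (hlav : ∀ n, F (xn n) + α n • (xn n - xbar) = yn n)
    (hres : Tendsto (fun n => ‖F (xn n) - y‖) atTop (nhds 0)) :
    ∃ xmin ∈ L, (∀ x ∈ L, ‖xmin - xbar‖ ≤ ‖x - xbar‖) ∧
      (∀ x' ∈ L, (∀ x ∈ L, ‖x' - xbar‖ ≤ ‖x - xbar‖) → x' = xmin) ∧
      Tendsto xn atTop (nhds xmin) := by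
  subst hLdef
  have hconvex := convex_setOf_apply_eq hmono hhemi y
  obtain ⟨xmin, hxmin, hmin⟩ := exists_isMinOn_norm_sub hLne
    (isClosed_setOf_apply_eq hmono hhemi y).isComplete hconvex xbar
  have hε0 : ∀ n, 0 ≤ δ n / α n := fun n =>
    div_nonneg ((norm_nonneg _).trans (hnoise n)) (hαpos n).le
  have hkey : ∀ n, ⟪xn n - xbar, xn n - xmin⟫ ≤ δ n / α n * ‖xn n - xmin‖ := fun n =>
    IsMonotoneOperator.inner_sub_le_of_lavrentiev hmono (hαpos n) hxmin (hnoise n) (hlav n)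
  refine ⟨xmin, hxmin, isMinOn_iff.mp hmin, fun x' hx' hmin' =>
    (isMinOn_iff.mpr hmin').eq_of_isMinOn_norm_sub hconvex hx' hxmin hmin,
    tendsto_of_inner_sub_le hε0 hratio hkey fun η hη => ?_⟩
  exact IsMonotoneOperator.eventually_inner_sub_lt hmono hhemi
    (eventually_norm_le_of_inner_sub_le hε0 hratio hkey) hres
    (hmin.inner_sub_nonpos hconvex hxmin) hη

/-- Convergence of Lavrentiev regularized solutions with an a posteriori parameter choice:
if δₙ → 0, δₙ/αₙ → 0 and the residuals ‖F(xₙ) − y‖ tend to zero, the regularized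
solutions converge strongly to the unique x̄-minimum-norm solution. -/
theorem stmt_5 {X : Type*} [NormedAddCommGroup X] [InnerProductSpace ℝ X] [CompleteSpace X]
    (F : X → X) (hmono : ∀ x x' : X, 0 ≤ ⟪F x - F x', x - x'⟫)
    (hhemi : ∀ x v w : X, ContinuousOn (fun t : ℝ => ⟪F (x + t • v), w⟫) (Set.Icc 0 1))
    (y xbar : X) (L : Set X) (hLdef : L = {x : X | F x = y}) (hLne : L.Nonempty)
    (δ α : ℕ → ℝ) (hδpos : ∀ n, 0 < δ n) (hαpos : ∀ n, 0 < α n)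
    (hδ0 : Tendsto δ atTop (nhds 0))
    (hratio : Tendsto (fun n => δ n / α n) atTop (nhds 0))
    (yn xn : ℕ → X) (hnoise : ∀ n, ‖y - yn n‖ ≤ δ n)
    (hlav : ∀ n, F (xn n) + α n • (xn n - xbar) = yn n)
    (hres : Tendsto (fun n => ‖F (xn n) - y‖) atTop (nhds 0)) :
    ∃ xmin ∈ L, (∀ x ∈ L, ‖xmin - xbar‖ ≤ ‖x - xbar‖) ∧
      (∀ x' ∈ L, (∀ x ∈ L, ‖x' - xbar‖ ≤ ‖x - xbar‖) → x' = xmin) ∧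
      Tendsto xn atTop (nhds xmin) :=
  stmt_5_general F hmono hhemi y xbar L hLdef hLne δ α hαpos hratio yn xn hnoise hlav hres
end

section
/- Let X be a real Hilbert space and F : X → X a monotone operator. Let y, yδ, x̄, x† ∈ X with F(x†) = y, x† ≠ x̄, ‖y − yδ‖ ≤ δ, and let δ ∈ (0,1), τ > 1, κ ∈ (0,1). Then for every α with 0 < α ≤ (τ − 1)δ^κ/(2‖x† − x̄‖), any xαδ ∈ X satisfying F(xαδ) + α(xαδ − x̄) = yδ has residual ‖F(xαδ) − yδ‖ ≤ τ δ^κ. -/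
open RealInnerProductSpace

/-- For sufficiently small regularization parameters α ≤ (τ−1)δ^κ/(2‖x†−x̄‖), the
Lavrentiev residual satisfies the discrepancy bound ‖F(x_α^δ) − y^δ‖ ≤ τδ^κ. -/
theorem stmt_6 {X : Type*} [NormedAddCommGroup X] [InnerProductSpace ℝ X] [CompleteSpace X]
    (F : X → X) (hmono : ∀ x x' : X, 0 ≤ ⟪F x - F x', x - x'⟫)
    (y yδ xbar xdag : X) (δ τ κ : ℝ)
    (hδ0 : 0 < δ) (hδ1 : δ < 1) (hτ : 1 < τ) (hκ0 : 0 < κ) (hκ1 : κ < 1)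
    (hne : xdag ≠ xbar) (hsol : F xdag = y) (hnoise : ‖y - yδ‖ ≤ δ) :
    ∀ α : ℝ, 0 < α → α ≤ (τ - 1) * δ ^ κ / (2 * ‖xdag - xbar‖) →
      ∀ xad : X, F xad + α • (xad - xbar) = yδ → ‖F xad - yδ‖ ≤ τ * δ ^ κ := by
  intro α hα hαle xad hxad
  set u : X := xad - xdag with hu
  set v : X := xdag - xbar with hv
  set e : X := yδ - y with he
  have hb : 0 < ‖v‖ := by
    rw [norm_pos_iff, hv, sub_ne_zero]; exact hne
  have hFx : F xad = yδ - α • (xad - xbar) := eq_sub_of_add_eq hxad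
  have hδκ : 0 < δ ^ κ := Real.rpow_pos_of_pos hδ0 κ
  have hδle : δ ≤ δ ^ κ := by
    have := Real.rpow_le_rpow_of_exponent_ge hδ0 hδ1.le hκ1.le
    simpa [Real.rpow_one] using this
  -- monotonicity step
  have hFd : F xad - F xdag = e - α • (u + v) := by
    rw [hFx, hsol, he, hu, hv]
    module
  have hm : 0 ≤ ⟪e - α • (u + v), u⟫ := by
    have := hmono xad xdag
    rwa [hFd] at this
  have hexp : 0 ≤ ⟪e, u⟫ - α * (⟪u, u⟫ + ⟪v, u⟫) := by
    rwa [inner_sub_left, real_inner_smul_left, inner_add_left] at hm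
  have huu : ⟪u, u⟫ = ‖u‖ ^ 2 := real_inner_self_eq_norm_sq u
  have heu : ⟪e, u⟫ ≤ δ * ‖u‖ := by
    calc ⟪e, u⟫ ≤ ‖e‖ * ‖u‖ := real_inner_le_norm e u
    _ ≤ δ * ‖u‖ := by
        apply mul_le_mul_of_nonneg_right _ (norm_nonneg u)
        rw [he, ← norm_neg]; simpa using hnoise
  have hvu : |⟪v, u⟫| ≤ ‖v‖ * ‖u‖ := abs_real_inner_le_norm v u
  have h1 : α * ‖u‖ ^ 2 ≤ δ * ‖u‖ + α * (‖v‖ * ‖u‖) := by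
    rw [huu] at hexp
    nlinarith [abs_le.1 hvu]
  have h2 : α * ‖u‖ ≤ δ + α * ‖v‖ := by
    rcases (norm_nonneg u).eq_or_lt with h | h
    · rw [← h, mul_zero]; positivity
    · nlinarith
  -- residual identity
  have hres : ‖F xad - yδ‖ = α * ‖xad - xbar‖ := by
    rw [hFx]
    have : yδ - α • (xad - xbar) - yδ = -(α • (xad - xbar)) := by module
    rw [this, norm_neg, norm_smul, Real.norm_of_nonneg hα.le]
  have htri : ‖xad - xbar‖ ≤ ‖u‖ + ‖v‖ := by
    have : xad - xbar = u + v := by rw [hu, hv]; module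
    rw [this]; exact norm_add_le u v
  have h2αv : α * (2 * ‖v‖) ≤ (τ - 1) * δ ^ κ := by
    have h2v : 0 < 2 * ‖v‖ := by positivity
    calc α * (2 * ‖v‖) ≤ ((τ - 1) * δ ^ κ / (2 * ‖v‖)) * (2 * ‖v‖) := by
          exact mul_le_mul_of_nonneg_right hαle h2v.le
    _ = (τ - 1) * δ ^ κ := div_mul_cancel₀ _ h2v.ne'
  calc ‖F xad - yδ‖ = α * ‖xad - xbar‖ := hres
  _ ≤ α * (‖u‖ + ‖v‖) := mul_le_mul_of_nonneg_left htri hα.le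
  _ ≤ δ + α * (2 * ‖v‖) := by nlinarith
  _ ≤ δ ^ κ + (τ - 1) * δ ^ κ := add_le_add hδle h2αv
  _ = τ * δ ^ κ := by ring
end

section
/- Let X be a real Hilbert space, A : X → X a bounded linear operator, x†, x̄ ∈ X with A(x† − x̄) ≠ 0, β ∈ [0,1), ψ an index function, and ε₀ > 0. Assume that for every ε ∈ (0, ε₀] the point x = x† + ε(x̄ − x†) satisfies the variational inequality ⟨x† − x̄, x† − x⟩ ≤ β‖x† − x‖² + ψ(‖A(x − x†)‖). Then liminf_{t→0+} ψ(t)/t ≥ ‖x† − x̄‖²/‖A(x† − x̄)‖ > 0. -/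
/-!
Along the segment `x = x† + ε (x̄ - x†)` every term of the variational inequality is explicit:
the inner product is `ε ‖x† - x̄‖²`, the penalty is `β ε² ‖x† - x̄‖²` and the argument of `ψ`
is `ε ‖A (x† - x̄)‖`. Substituting `t = ε ‖A (x† - x̄)‖` gives
`ψ t / t ≥ ‖x† - x̄‖² / ‖A (x† - x̄)‖ - O(t)` for small `t > 0`.
-/

open RealInnerProductSpace Filter Topology

theorem vsc_along_segment {X Y : Type*} [NormedAddCommGroup X] [InnerProductSpace ℝ X]
    [SeminormedAddCommGroup Y] [NormedSpace ℝ Y] (A : X →L[ℝ] Y) (xdag xbar : X)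
    (β : ℝ) (ψ : ℝ → ℝ) {ε : ℝ} (hε : 0 < ε)
    (h : ⟪xdag - xbar, xdag - (xdag + ε • (xbar - xdag))⟫ ≤
        β * ‖xdag - (xdag + ε • (xbar - xdag))‖ ^ 2 +
          ψ ‖A ((xdag + ε • (xbar - xdag)) - xdag)‖) :
    ε * ‖xdag - xbar‖ ^ 2 ≤
      β * (ε ^ 2 * ‖xdag - xbar‖ ^ 2) + ψ (ε * ‖A (xdag - xbar)‖) := by
  have hdiff : xdag - (xdag + ε • (xbar - xdag)) = ε • (xdag - xbar) := by
    rw [smul_sub, smul_sub]; abel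
  have hstep : (xdag + ε • (xbar - xdag)) - xdag = -(ε • (xdag - xbar)) := by
    rw [smul_sub, smul_sub]; abel
  rw [hdiff, hstep, map_neg, norm_neg, map_smul, norm_smul, norm_smul, Real.norm_of_nonneg hε.le,
    real_inner_smul_right, real_inner_self_eq_norm_sq, mul_pow] at h
  exact h

theorem sub_le_div_of_forall_mul_le {ψ : ℝ → ℝ} {a d β ε₀ : ℝ} (ha : 0 < a)
    (h : ∀ ε, 0 < ε → ε ≤ ε₀ → ε * d ≤ β * (ε ^ 2 * d) + ψ (ε * a))
    {t : ℝ} (ht : 0 < t) (htε₀ : t ≤ ε₀ * a) :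
    d / a - β * d / a ^ 2 * t ≤ ψ t / t := by
  have hbound := h (t / a) (div_pos ht ha) ((div_le_iff₀ ha).2 htε₀)
  rw [div_mul_cancel₀ _ ha.ne'] at hbound
  rw [le_div_iff₀ ht]
  calc (d / a - β * d / a ^ 2 * t) * t = t / a * d - β * ((t / a) ^ 2 * d) := by
        field_simp
    _ ≤ ψ t := by linarith

theorem eventually_le_div_of_forall_mul_le {ψ : ℝ → ℝ} {a d β ε₀ : ℝ} (ha : 0 < a)
    (hε₀ : 0 < ε₀) (h : ∀ ε, 0 < ε → ε ≤ ε₀ → ε * d ≤ β * (ε ^ 2 * d) + ψ (ε * a))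
    {c : ℝ} (hc : c < d / a) : ∀ᶠ t in 𝓝[>] 0, c ≤ ψ t / t := by
  have hlim : Tendsto (fun t : ℝ => d / a - β * d / a ^ 2 * t) (𝓝[>] 0) (𝓝 (d / a)) := by
    have hcont : Continuous (fun t : ℝ => d / a - β * d / a ^ 2 * t) := by fun_prop
    simpa using (hcont.tendsto 0).mono_left nhdsWithin_le_nhds
  filter_upwards [hlim.eventually (eventually_gt_nhds hc),
    Ioc_mem_nhdsGT (mul_pos hε₀ ha)] with t hct ht
  exact hct.le.trans (sub_le_div_of_forall_mul_le ha h ht.1 ht.2)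

theorem stmt_7_general {X : Type*} [NormedAddCommGroup X] [InnerProductSpace ℝ X]
    (A : X →L[ℝ] X) (xdag xbar : X) (hAne : A (xdag - xbar) ≠ 0)
    (β : ℝ)
    (ψ : ℝ → ℝ)
    (ε₀ : ℝ) (hε₀ : 0 < ε₀)
    (hvsc : ∀ ε : ℝ, 0 < ε → ε ≤ ε₀ →
      ⟪xdag - xbar, xdag - (xdag + ε • (xbar - xdag))⟫ ≤
        β * ‖xdag - (xdag + ε • (xbar - xdag))‖ ^ 2 +
          ψ ‖A ((xdag + ε • (xbar - xdag)) - xdag)‖) :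
    0 < ‖xdag - xbar‖ ^ 2 / ‖A (xdag - xbar)‖ ∧
      ∀ c : ℝ, c < ‖xdag - xbar‖ ^ 2 / ‖A (xdag - xbar)‖ →
        ∀ᶠ t in nhdsWithin 0 (Set.Ioi 0), c ≤ ψ t / t := by
  have hx : xdag - xbar ≠ 0 := fun h => hAne (by rw [h, map_zero])
  have ha : 0 < ‖A (xdag - xbar)‖ := norm_pos_iff.2 hAne
  refine ⟨div_pos (pow_pos (norm_pos_iff.2 hx) 2) ha, fun c hc => ?_⟩
  exact eventually_le_div_of_forall_mul_le ha hε₀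
    (fun ε hε hεε₀ => vsc_along_segment A xdag xbar β ψ hε (hvsc ε hε hεε₀)) hc

/-- In the linear case, the Tikhonov-type variational source condition forces the index
function ψ to decay to zero not faster than linearly:
liminf_{t→0+} ψ(t)/t ≥ ‖x†−x̄‖²/‖A(x†−x̄)‖ > 0.  The liminf bound is expressed in the
robust form "for every c below the bound, eventually ψ(t)/t ≥ c as t → 0+". -/
theorem stmt_7 {X : Type*} [NormedAddCommGroup X] [InnerProductSpace ℝ X] [CompleteSpace X]
    (A : X →L[ℝ] X) (xdag xbar : X) (hAne : A (xdag - xbar) ≠ 0)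
    (β : ℝ) (hβ0 : 0 ≤ β) (hβ1 : β < 1)
    (ψ : ℝ → ℝ) (hψcont : ContinuousOn ψ (Set.Ioi 0))
    (hψmono : StrictMonoOn ψ (Set.Ioi 0)) (hψpos : ∀ t > (0:ℝ), 0 < ψ t)
    (hψ0 : Tendsto ψ (nhdsWithin 0 (Set.Ioi 0)) (nhds 0))
    (ε₀ : ℝ) (hε₀ : 0 < ε₀)
    (hvsc : ∀ ε : ℝ, 0 < ε → ε ≤ ε₀ →
      ⟪xdag - xbar, xdag - (xdag + ε • (xbar - xdag))⟫ ≤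
        β * ‖xdag - (xdag + ε • (xbar - xdag))‖ ^ 2 +
          ψ ‖A ((xdag + ε • (xbar - xdag)) - xdag)‖) :
    0 < ‖xdag - xbar‖ ^ 2 / ‖A (xdag - xbar)‖ ∧
      ∀ c : ℝ, c < ‖xdag - xbar‖ ^ 2 / ‖A (xdag - xbar)‖ →
        ∀ᶠ t in nhdsWithin 0 (Set.Ioi 0), c ≤ ψ t / t :=
  stmt_7_general A xdag xbar hAne β ψ ε₀ hε₀ hvsc
end

section
/- Let X be a real Hilbert space, F : X → X, y ∈ X, and let L = {x ∈ X : F(x) = y}. Let x†_min ∈ L be an x̄-minimum-norm solution and let x† ∈ L satisfy the variational source condition ⟨x† − x̄, x† − x⟩ ≤ β‖x† − x‖² + ψ(‖F(x) − F(x†)‖) for all x ∈ M, where 0 ≤ β ≤ 1/2, ψ is an index function extended by ψ(0) = 0, and M ⊆ X is a set containing x†_min. Then ‖x† − x̄‖ ≤ ‖x†_min − x̄‖; that is, x† is itself an x̄-minimum-norm solution. -/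
open RealInnerProductSpace Filter

/-- If 0 ≤ β ≤ 1/2 and the set M contains an x̄-minimum-norm solution, then any solution
x† satisfying the Tikhonov-type variational source condition is itself an
x̄-minimum-norm solution. -/
theorem stmt_8 {X : Type*} [NormedAddCommGroup X] [InnerProductSpace ℝ X] [CompleteSpace X]
    (F : X → X) (y xbar : X) (L : Set X) (hLdef : L = {x : X | F x = y})
    (xmin : X) (hxminL : xmin ∈ L) (hxmin : ∀ x ∈ L, ‖xmin - xbar‖ ≤ ‖x - xbar‖)
    (xdag : X) (hxdagL : xdag ∈ L)
    (β : ℝ) (hβ0 : 0 ≤ β) (hβ1 : β ≤ 1 / 2)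
    (ψ : ℝ → ℝ) (hψcont : ContinuousOn ψ (Set.Ioi 0))
    (hψmono : StrictMonoOn ψ (Set.Ioi 0)) (hψpos : ∀ t > (0:ℝ), 0 < ψ t)
    (hψ0 : Tendsto ψ (nhdsWithin 0 (Set.Ioi 0)) (nhds 0)) (hψzero : ψ 0 = 0)
    (M : Set X) (hxminM : xmin ∈ M)
    (hvsc : ∀ x ∈ M,
      ⟪xdag - xbar, xdag - x⟫ ≤ β * ‖xdag - x‖ ^ 2 + ψ ‖F x - F xdag‖) :
    ‖xdag - xbar‖ ≤ ‖xmin - xbar‖ := by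
  have hFmin : F xmin = y := by rw [hLdef] at hxminL; exact hxminL
  have hFdag : F xdag = y := by rw [hLdef] at hxdagL; exact hxdagL
  have h := hvsc xmin hxminM
  rw [hFmin, hFdag, sub_self, norm_zero, hψzero, add_zero] at h
  have hdecomp : xdag - xmin = (xdag - xbar) - (xmin - xbar) := by abel
  have h1 : ‖xdag - xmin‖ ^ 2 =
      ‖xdag - xbar‖ ^ 2 - 2 * ⟪xdag - xbar, xmin - xbar⟫ + ‖xmin - xbar‖ ^ 2 := by
    rw [hdecomp, @norm_sub_sq_real]
  have h2 : ⟪xdag - xbar, xdag - xmin⟫ =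
      ‖xdag - xbar‖ ^ 2 - ⟪xdag - xbar, xmin - xbar⟫ := by
    rw [hdecomp, inner_sub_right, real_inner_self_eq_norm_sq]
  have hcs : ⟪xdag - xbar, xmin - xbar⟫ ≤ ‖xdag - xbar‖ * ‖xmin - xbar‖ :=
    real_inner_le_norm _ _
  have ha : (0:ℝ) ≤ ‖xdag - xbar‖ := norm_nonneg _
  have hb : (0:ℝ) ≤ ‖xmin - xbar‖ := norm_nonneg _
  nlinarith [sq_nonneg (‖xdag - xbar‖ - ‖xmin - xbar‖), sq_nonneg (‖xdag - xbar‖ + ‖xmin - xbar‖), mul_nonneg ha hb]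
end

section
/- Let X be a real Hilbert space, F : X → X a monotone operator, and suppose the Tikhonov-type variational source condition ⟨x† − x̄, x† − x⟩ ≤ β‖x† − x‖² + C‖F(x) − F(x†)‖ holds for all x ∈ M, where β ∈ [0,1), C > 0, M ⊆ X, and F(x†) = y. Then there is a constant K > 0, depending only on β, C and ‖x† − x̄‖, such that for every δ ∈ (0,1], every yδ ∈ X with ‖y − yδ‖ ≤ δ, and every xαδ ∈ M satisfying F(xαδ) + α(xαδ − x̄) = yδ with the a priori choice α = δ^{2/3}, one has ‖xαδ − x†‖ ≤ K δ^{1/3}. -/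
open RealInnerProductSpace

lemma quad_bound_aux {t A B : ℝ} (ht : 0 ≤ t) (hA : 0 ≤ A) (hB : 0 ≤ B)
    (h : t ^ 2 ≤ A * t + B) : t ≤ A + Real.sqrt B := by
  by_contra hc
  push_neg at hc
  nlinarith [Real.sq_sqrt hB, Real.sqrt_nonneg B]

/-- Best possible rate O(δ^{1/3}) under the Tikhonov-type variational source condition
with ψ(t) = C·t and the a priori choice α = δ^{2/3}. -/
theorem stmt_10 {X : Type*} [NormedAddCommGroup X] [InnerProductSpace ℝ X] [CompleteSpace X]
    (F : X → X) (hmono : ∀ x x' : X, 0 ≤ ⟪F x - F x', x - x'⟫)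
    (y xbar xdag : X) (hsol : F xdag = y)
    (β C : ℝ) (hβ0 : 0 ≤ β) (hβ1 : β < 1) (hC : 0 < C)
    (M : Set X)
    (hvsc : ∀ x ∈ M,
      ⟪xdag - xbar, xdag - x⟫ ≤ β * ‖xdag - x‖ ^ 2 + C * ‖F x - F xdag‖) :
    ∃ K : ℝ, 0 < K ∧ ∀ δ : ℝ, 0 < δ → δ ≤ 1 → ∀ yδ : X, ‖y - yδ‖ ≤ δ →
      ∀ xad ∈ M, F xad + (δ ^ ((2:ℝ)/3)) • (xad - xbar) = yδ →
        ‖xad - xdag‖ ≤ K * δ ^ ((1:ℝ)/3) := by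
  set R : ℝ := ‖xdag - xbar‖ with hR
  have hβ' : 0 < 1 - β := by linarith
  have hR0 : (0:ℝ) ≤ R := norm_nonneg _
  have hc2 : (0:ℝ) ≤ C * (1 + R) / (1 - β) := by positivity
  refine ⟨(1 + C) / (1 - β) + Real.sqrt (C * (1 + R) / (1 - β)), ?_, ?_⟩
  · have : 0 < (1 + C) / (1 - β) := by positivity
    have := Real.sqrt_nonneg (C * (1 + R) / (1 - β))
    linarith
  intro δ hδ hδ1 yδ hy xad hM heq
  set α : ℝ := δ ^ ((2:ℝ)/3) with hα
  have hα0 : 0 < α := Real.rpow_pos_of_pos hδ _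
  have hd13 : 0 < δ ^ ((1:ℝ)/3) := Real.rpow_pos_of_pos hδ _
  set t : ℝ := ‖xad - xdag‖ with htdef
  have ht0 : 0 ≤ t := norm_nonneg _
  -- residual identity
  have hFe : F xad - F xdag = (yδ - y) - α • (xad - xbar) := by
    rw [hsol, ← heq]; abel
  -- norm bound on residual
  have hN : ‖F xad - F xdag‖ ≤ δ + α * (t + R) := by
    rw [hFe]
    have h1 : ‖(yδ - y) - α • (xad - xbar)‖ ≤ ‖yδ - y‖ + ‖α • (xad - xbar)‖ :=
      norm_sub_le _ _
    have h2 : ‖yδ - y‖ ≤ δ := by rwa [norm_sub_rev]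
    have h3 : ‖α • (xad - xbar)‖ = α * ‖xad - xbar‖ := by
      rw [norm_smul, Real.norm_eq_abs, abs_of_pos hα0]
    have h4 : ‖xad - xbar‖ ≤ t + R := by
      calc ‖xad - xbar‖ = ‖(xad - xdag) + (xdag - xbar)‖ := by abel_nf
        _ ≤ ‖xad - xdag‖ + ‖xdag - xbar‖ := norm_add_le _ _
    nlinarith
  -- key inner product inequality
  have h1 : α * ⟪xad - xbar, xad - xdag⟫ ≤ δ * t := by
    have e1 : ⟪(F xad - F xdag) + α • (xad - xbar), xad - xdag⟫
        = ⟪yδ - y, xad - xdag⟫ := by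
      congr 1
      rw [hFe]; abel
    rw [inner_add_left, real_inner_smul_left] at e1
    have hcs : ⟪yδ - y, xad - xdag⟫ ≤ ‖yδ - y‖ * ‖xad - xdag‖ := real_inner_le_norm _ _
    have h2 : ‖yδ - y‖ ≤ δ := by rwa [norm_sub_rev]
    have hm := hmono xad xdag
    nlinarith
  -- expand
  have hexp : ⟪xad - xbar, xad - xdag⟫ = t ^ 2 - ⟪xdag - xbar, xdag - xad⟫ := by
    have e : xad - xbar = (xad - xdag) + (xdag - xbar) := by abel
    have hneg : ⟪xdag - xbar, xad - xdag⟫ = -⟪xdag - xbar, xdag - xad⟫ := by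
      rw [show xad - xdag = -(xdag - xad) from by abel, inner_neg_right]
    rw [e, inner_add_left, real_inner_self_eq_norm_sq, hneg, htdef]
    ring
  have hv := hvsc xad hM
  rw [norm_sub_rev xdag xad] at hv
  -- combine: (1-β) α t² ≤ δ t + α C N
  have hmain : (1 - β) * α * t ^ 2 ≤ δ * t + α * C * ‖F xad - F xdag‖ := by
    rw [hexp] at h1
    nlinarith
  -- scalar reductions
  have hδsplit : δ = δ ^ ((1:ℝ)/3) * α := by
    rw [hα, ← Real.rpow_add hδ]; norm_num
  have hαle : α ≤ δ ^ ((1:ℝ)/3) :=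
    Real.rpow_le_rpow_of_exponent_ge hδ hδ1 (by norm_num)
  have hδle : δ ≤ α := by
    nth_rewrite 1 [show δ = δ ^ (1:ℝ) by rw [Real.rpow_one]]
    exact Real.rpow_le_rpow_of_exponent_ge hδ hδ1 (by norm_num)
  have hquad : t ^ 2 ≤ ((1 + C) / (1 - β) * δ ^ ((1:ℝ)/3)) * t
      + (C * (1 + R) / (1 - β)) * α := by
    have hN' : ‖F xad - F xdag‖ ≤ δ + α * (t + R) := hN
    have key : (1 - β) * α * t ^ 2 ≤ δ ^ ((1:ℝ)/3) * α * t + α * C * (δ + α * (t + R)) := by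
      have hmul := mul_le_mul_of_nonneg_left hN' (mul_nonneg hα0.le hC.le)
      calc (1 - β) * α * t ^ 2 ≤ δ * t + α * C * ‖F xad - F xdag‖ := hmain
        _ ≤ δ * t + α * C * (δ + α * (t + R)) := by linarith
        _ = δ ^ ((1:ℝ)/3) * α * t + α * C * (δ + α * (t + R)) := by
            rw [← hδsplit]
    have h5 : (1 - β) * t ^ 2 ≤ δ ^ ((1:ℝ)/3) * t + C * (δ + α * (t + R)) := by
      refine le_of_mul_le_mul_left ?_ hα0
      calc α * ((1 - β) * t ^ 2) = (1 - β) * α * t ^ 2 := by ring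
        _ ≤ δ ^ ((1:ℝ)/3) * α * t + α * C * (δ + α * (t + R)) := key
        _ = α * (δ ^ ((1:ℝ)/3) * t + C * (δ + α * (t + R))) := by ring
    have e1 : C * (α * t) ≤ C * (δ ^ ((1:ℝ)/3) * t) :=
      mul_le_mul_of_nonneg_left (mul_le_mul_of_nonneg_right hαle ht0) hC.le
    have e2 : C * δ ≤ C * α := mul_le_mul_of_nonneg_left hδle hC.le
    have h6 : (1 - β) * t ^ 2 ≤ (1 + C) * δ ^ ((1:ℝ)/3) * t + C * (1 + R) * α := by
      nlinarith [e1, e2]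
    calc t ^ 2 = ((1 - β) * t ^ 2) / (1 - β) := by field_simp
      _ ≤ ((1 + C) * δ ^ ((1:ℝ)/3) * t + C * (1 + R) * α) / (1 - β) := by
          gcongr
      _ = (1 + C) / (1 - β) * δ ^ ((1:ℝ)/3) * t + C * (1 + R) / (1 - β) * α := by ring
  have hfin : t ≤ (1 + C) / (1 - β) * δ ^ ((1:ℝ)/3)
      + Real.sqrt ((C * (1 + R) / (1 - β)) * α) := by
    apply quad_bound_aux ht0 (by positivity) (by positivity) hquad
  have hsq : Real.sqrt ((C * (1 + R) / (1 - β)) * α)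
      = Real.sqrt (C * (1 + R) / (1 - β)) * δ ^ ((1:ℝ)/3) := by
    rw [Real.sqrt_mul hc2]
    congr 1
    rw [hα, Real.sqrt_eq_rpow, ← Real.rpow_mul hδ.le]
    norm_num
  rw [hsq] at hfin
  calc ‖xad - xdag‖ = t := rfl
    _ ≤ (1 + C) / (1 - β) * δ ^ ((1:ℝ)/3)
        + Real.sqrt (C * (1 + R) / (1 - β)) * δ ^ ((1:ℝ)/3) := hfin
    _ = ((1 + C) / (1 - β) + Real.sqrt (C * (1 + R) / (1 - β))) * δ ^ ((1:ℝ)/3) := by ring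
end

section
/- Let X be a real Hilbert space, F : X → X a monotone operator, and suppose the Lavrentiev-type variational source condition ⟨x† − x̄, x† − x⟩ ≤ β‖x − x†‖² + φ(⟨F(x) − F(x†), x − x†⟩) holds for all x ∈ M, where β ∈ [0,1), φ is an index function extended by φ(0) = 0, M ⊆ X, and F(x†) = y. Let f : (0,∞) → (0,∞) be an index function mapping (0,∞) onto (0,∞), set f̃(s) := ∫₀^s f(t) dt, and assume f̃(φ(s)) ≤ s for all s > 0. Let G : (0,∞) → (0,∞) satisfy G(α) ≥ ∫₀^α f⁻¹(τ) dτ and set Ψ(α) := G(α)/α. Then for every δ > 0, α > 0, yδ ∈ X with ‖y − yδ‖ ≤ δ, and every xαδ ∈ M satisfying F(xαδ) + α(xαδ − x̄) = yδ, one has ‖xαδ − x†‖² ≤ δ²/((1 − β)² α²) + (2/(1 − β)) Ψ(α). -/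
/-!
Testing the Lavrentiev equation against `x − x†` and inserting the source condition gives
`(1 − β) α ‖x − x†‖² + s ≤ δ ‖x − x†‖ + α φ(s)` with `s = ⟪F x − F x†, x − x†⟫ ≥ 0`.
Young's inequality `α u ≤ ∫₀^u f + ∫₀^α f⁻¹`, obtained by covering the rectangle
`(0, u] × (0, α]` with the subgraphs of `f` and of `f⁻¹`, applied at `u = φ(s)` together with
`f̃(φ(s)) ≤ s` bounds `α φ(s) − s` by `G(α)`. Completing the square in `‖x − x†‖` finishes.
-/

open RealInnerProductSpace Filter

section YoungInequality

open MeasureTheory Set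

variable {f g : ℝ → ℝ}

lemma volume_subgraph_Ioc (hf : Monotone f) (hf0 : ∀ t, 0 ≤ f t) {u : ℝ} (hu : 0 ≤ u) :
    volume {p : ℝ × ℝ | p.1 ∈ Ioc 0 u ∧ p.2 ∈ Ioc 0 (f p.1)} =
      ENNReal.ofReal (∫ t in (0:ℝ)..u, f t) := by
  rw [Measure.volume_eq_prod, Measure.prod_apply
      (measurableSet_region_between_oc measurable_const hf.measurable measurableSet_Ioc),
    intervalIntegral.integral_of_le hu, ofReal_integral_eq_lintegral_ofReal
      hf.intervalIntegrable.1 (ae_of_all _ hf0), ← lintegral_indicator measurableSet_Ioc]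
  congr 1 with t
  by_cases ht : t ∈ Ioc 0 u
  · rw [indicator_of_mem ht, ← sub_zero (f t), ← Real.volume_Ioc]
    congr 1 with τ
    simp [ht.1, ht.2]
  · rw [indicator_of_notMem ht]
    exact measure_mono_null (fun τ hτ => (ht hτ.1).elim) measure_empty

theorem mul_le_integral_add_integral_of_monotone (hf : Monotone f) (hg : Monotone g)
    (hf0 : ∀ t, 0 ≤ f t) (hg0 : ∀ τ, 0 ≤ g τ)
    (hfg : ∀ t > 0, ∀ τ > 0, f t < τ → t ≤ g τ) {u α : ℝ} (hu : 0 ≤ u) (hα : 0 ≤ α) :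
    α * u ≤ (∫ t in (0:ℝ)..u, f t) + ∫ τ in (0:ℝ)..α, g τ := by
  set A := {p : ℝ × ℝ | p.1 ∈ Ioc 0 u ∧ p.2 ∈ Ioc 0 (f p.1)}
  set B := {q : ℝ × ℝ | q.1 ∈ Ioc 0 α ∧ q.2 ∈ Ioc 0 (g q.1)}
  have hcover : Ioc 0 u ×ˢ Ioc 0 α ⊆ A ∪ Prod.swap ⁻¹' B := by
    rintro ⟨t, τ⟩ ⟨ht, hτ⟩
    by_cases h : τ ≤ f t
    · exact Or.inl ⟨ht, hτ.1, h⟩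
    · exact Or.inr ⟨hτ, ht.1, hfg t ht.1 τ hτ.1 (not_le.mp h)⟩
  have hswap : volume (Prod.swap ⁻¹' B) = volume B :=
    (Measure.measurePreserving_swap (μ := volume) (ν := volume)).measure_preimage
      (measurableSet_region_between_oc measurable_const hg.measurable
        measurableSet_Ioc).nullMeasurableSet
  have hIf : 0 ≤ ∫ t in (0:ℝ)..u, f t := intervalIntegral.integral_nonneg hu fun t _ => hf0 t
  have hIg : 0 ≤ ∫ τ in (0:ℝ)..α, g τ := intervalIntegral.integral_nonneg hα fun τ _ => hg0 τ
  rw [← ENNReal.ofReal_le_ofReal_iff (add_nonneg hIf hIg), ENNReal.ofReal_add hIf hIg,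
    ← volume_subgraph_Ioc hf hf0 hu, ← volume_subgraph_Ioc hg hg0 hα, ← hswap]
  calc ENNReal.ofReal (α * u) = volume (Ioc 0 u ×ˢ Ioc 0 α) := by
        rw [Measure.volume_eq_prod, Measure.prod_prod, Real.volume_Ioc, Real.volume_Ioc,
          sub_zero, sub_zero, ← ENNReal.ofReal_mul hu, mul_comm]
    _ ≤ volume (A ∪ Prod.swap ⁻¹' B) := measure_mono hcover
    _ ≤ volume A + volume (Prod.swap ⁻¹' B) := measure_union_le _ _

lemma monotone_indicator_Ioi (hf : MonotoneOn f (Ioi 0)) (hf0 : ∀ t > 0, 0 ≤ f t) :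
    Monotone ((Ioi (0:ℝ)).indicator f) := by
  intro s t hst
  by_cases hs : 0 < s
  · have ht : 0 < t := hs.trans_le hst
    simpa [indicator_of_mem, hs, ht] using hf hs ht hst
  · rw [indicator_of_notMem (mem_Ioi.not.mpr hs)]
    exact indicator_nonneg hf0 t

lemma intervalIntegral_indicator_Ioi (f : ℝ → ℝ) {u : ℝ} (hu : 0 ≤ u) :
    ∫ t in (0:ℝ)..u, (Ioi 0).indicator f t = ∫ t in (0:ℝ)..u, f t := by
  rw [intervalIntegral.integral_of_le hu, intervalIntegral.integral_of_le hu,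
    setIntegral_indicator measurableSet_Ioi, inter_eq_left.mpr Ioc_subset_Ioi_self]

theorem mul_le_integral_add_integral_inv (hf : StrictMonoOn f (Ioi 0))
    (hf0 : ∀ t > 0, 0 < f t) (hfsurj : Ioi 0 ⊆ f '' Ioi 0) (hgf : ∀ t > 0, g (f t) = t)
    {u α : ℝ} (hu : 0 ≤ u) (hα : 0 ≤ α) :
    α * u ≤ (∫ t in (0:ℝ)..u, f t) + ∫ τ in (0:ℝ)..α, g τ := by
  have hg0 : ∀ τ > 0, 0 < g τ := by
    intro τ hτ
    obtain ⟨a, ha, rfl⟩ := hfsurj hτ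
    rwa [hgf a ha]
  have hg : MonotoneOn g (Ioi 0) := by
    intro σ hσ τ hτ hστ
    obtain ⟨a, ha, rfl⟩ := hfsurj hσ
    obtain ⟨b, hb, rfl⟩ := hfsurj hτ
    rw [hgf a ha, hgf b hb]
    exact (hf.le_iff_le ha hb).mp hστ
  have hfg : ∀ t > 0, ∀ τ > 0, (Ioi 0).indicator f t < τ → t ≤ (Ioi 0).indicator g τ := by
    intro t ht τ hτ h
    obtain ⟨a, ha, rfl⟩ := hfsurj hτ
    rw [indicator_of_mem (mem_Ioi.mpr ht)] at h
    rw [indicator_of_mem (mem_Ioi.mpr hτ), hgf a ha]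
    exact ((hf.lt_iff_lt ht ha).mp h).le
  -- Extending `f` and `g` by `0` on `(-∞, 0]` makes them monotone on `ℝ` without changing
  -- the integrals.
  have hyoung := mul_le_integral_add_integral_of_monotone
    (monotone_indicator_Ioi hf.monotoneOn fun t ht => (hf0 t ht).le)
    (monotone_indicator_Ioi hg fun τ hτ => (hg0 τ hτ).le)
    (indicator_nonneg fun t ht => (hf0 t ht).le) (indicator_nonneg fun τ hτ => (hg0 τ hτ).le)
    hfg hu hα
  rwa [intervalIntegral_indicator_Ioi f hu, intervalIntegral_indicator_Ioi g hα] at hyoung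

end YoungInequality

section Lavrentiev

variable {X : Type*} [NormedAddCommGroup X] [InnerProductSpace ℝ X]

theorem lavrentiev_error_le {F : X → X} {x xbar xdag yδ : X} {α β δ r : ℝ} (hα : 0 ≤ α)
    (hlav : F x + α • (x - xbar) = yδ) (hnoise : ‖F xdag - yδ‖ ≤ δ)
    (hsrc : ⟪xdag - xbar, xdag - x⟫ ≤ β * ‖x - xdag‖ ^ 2 + r) :
    (1 - β) * α * ‖x - xdag‖ ^ 2 + ⟪F x - F xdag, x - xdag⟫ ≤ δ * ‖x - xdag‖ + α * r := by
  have hresid : yδ - F xdag = (F x - F xdag) + α • ((x - xdag) + (xdag - xbar)) := by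
    rw [← hlav]
    module
  have hcs : ⟪yδ - F xdag, x - xdag⟫ ≤ δ * ‖x - xdag‖ :=
    (real_inner_le_norm _ _).trans (by rw [norm_sub_rev]; gcongr)
  have hflip : ⟪xdag - xbar, x - xdag⟫ = -⟪xdag - xbar, xdag - x⟫ := by
    rw [← inner_neg_right, neg_sub]
  rw [hresid, inner_add_left, real_inner_smul_left, inner_add_left,
    real_inner_self_eq_norm_sq, hflip] at hcs
  linarith [mul_le_mul_of_nonneg_left hsrc hα]

end Lavrentiev

lemma sq_le_of_mul_sq_le_mul_add {c e δ G : ℝ} (hc : 0 < c) (h : c * e ^ 2 ≤ δ * e + G) :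
    e ^ 2 ≤ δ ^ 2 / c ^ 2 + 2 * G / c := by
  have hsq : c ^ 2 * e ^ 2 ≤ δ ^ 2 + 2 * c * G := by
    nlinarith [sq_nonneg (c * e - δ), mul_le_mul_of_nonneg_left h hc.le]
  calc e ^ 2 = c ^ 2 * e ^ 2 / c ^ 2 := by field_simp
    _ ≤ (δ ^ 2 + 2 * c * G) / c ^ 2 := by gcongr
    _ = δ ^ 2 / c ^ 2 + 2 * G / c := by field_simp

theorem stmt_12_general {X : Type*} [NormedAddCommGroup X] [InnerProductSpace ℝ X]
    (F : X → X) (hmono : ∀ x x' : X, 0 ≤ ⟪F x - F x', x - x'⟫)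
    (y xbar xdag : X) (hsol : F xdag = y)
    (β : ℝ) (hβ1 : β < 1)
    (φ : ℝ → ℝ) (hφpos : ∀ t > (0:ℝ), 0 < φ t) (hφzero : φ 0 = 0)
    (M : Set X)
    (hvsc : ∀ x ∈ M,
      ⟪xdag - xbar, xdag - x⟫ ≤ β * ‖x - xdag‖ ^ 2 + φ ⟪F x - F xdag, x - xdag⟫)
    (f g : ℝ → ℝ)
    (hfmono : StrictMonoOn f (Set.Ioi 0)) (hfpos : ∀ t > (0:ℝ), 0 < f t)
    (hfsurj : Set.Ioi (0:ℝ) ⊆ f '' Set.Ioi 0)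
    (hg : ∀ t > (0:ℝ), g (f t) = t)
    (hftilde : ∀ s > (0:ℝ), (∫ t in (0:ℝ)..(φ s), f t) ≤ s)
    (G : ℝ → ℝ) (hG : ∀ α > (0:ℝ), (∫ τ in (0:ℝ)..α, g τ) ≤ G α)
    (δ α : ℝ) (hα : 0 < α) (yδ : X) (hnoise : ‖y - yδ‖ ≤ δ)
    (xad : X) (hxadM : xad ∈ M) (hlav : F xad + α • (xad - xbar) = yδ) :
    ‖xad - xdag‖ ^ 2 ≤
      δ ^ 2 / ((1 - β) ^ 2 * α ^ 2) + (2 / (1 - β)) * (G α / α) := by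
  have herr := lavrentiev_error_le (δ := δ) hα.le hlav (by rwa [hsol]) (hvsc xad hxadM)
  set s := ⟪F xad - F xdag, xad - xdag⟫
  have hφs : 0 ≤ φ s ∧ (∫ t in (0:ℝ)..φ s, f t) ≤ s := by
    rcases (show 0 ≤ s from hmono xad xdag).eq_or_lt with hs | hs
    · rw [← hs, hφzero]
      simp
    · exact ⟨(hφpos s hs).le, hftilde s hs⟩
  have hyoung := mul_le_integral_add_integral_inv hfmono hfpos hfsurj hg hφs.1 hα.le
  have hc : 0 < (1 - β) * α := mul_pos (sub_pos.mpr hβ1) hα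
  have hquad : (1 - β) * α * ‖xad - xdag‖ ^ 2 ≤ δ * ‖xad - xdag‖ + G α := by
    linarith [hG α hα]
  calc ‖xad - xdag‖ ^ 2 ≤ δ ^ 2 / ((1 - β) * α) ^ 2 + 2 * G α / ((1 - β) * α) :=
        sq_le_of_mul_sq_le_mul_add hc hquad
    _ = δ ^ 2 / ((1 - β) ^ 2 * α ^ 2) + (2 / (1 - β)) * (G α / α) := by
        rw [mul_pow, div_mul_div_comm]

/-- Error estimate for Lavrentiev regularization under the Lavrentiev-specific variational
source condition (Theorem 3.2, estimate (estim1_Lavr)):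
‖x_α^δ − x†‖² ≤ δ²/((1−β)²α²) + (2/(1−β)) Ψ(α) with Ψ(α) = G(α)/α, where the index
function f (with inverse g on (0,∞)) satisfies f̃(φ(s)) ≤ s for the antiderivative f̃ of f,
and G(α) ≥ ∫₀^α f⁻¹(τ) dτ. -/
theorem stmt_12 {X : Type*} [NormedAddCommGroup X] [InnerProductSpace ℝ X] [CompleteSpace X]
    (F : X → X) (hmono : ∀ x x' : X, 0 ≤ ⟪F x - F x', x - x'⟫)
    (y xbar xdag : X) (hsol : F xdag = y)
    (β : ℝ) (hβ0 : 0 ≤ β) (hβ1 : β < 1)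
    (φ : ℝ → ℝ) (hφcont : ContinuousOn φ (Set.Ioi 0))
    (hφmono : StrictMonoOn φ (Set.Ioi 0)) (hφpos : ∀ t > (0:ℝ), 0 < φ t)
    (hφ0 : Tendsto φ (nhdsWithin 0 (Set.Ioi 0)) (nhds 0)) (hφzero : φ 0 = 0)
    (M : Set X)
    (hvsc : ∀ x ∈ M,
      ⟪xdag - xbar, xdag - x⟫ ≤ β * ‖x - xdag‖ ^ 2 + φ ⟪F x - F xdag, x - xdag⟫)
    (f g : ℝ → ℝ) (hfcont : ContinuousOn f (Set.Ioi 0))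
    (hfmono : StrictMonoOn f (Set.Ioi 0)) (hfpos : ∀ t > (0:ℝ), 0 < f t)
    (hf0 : Tendsto f (nhdsWithin 0 (Set.Ioi 0)) (nhds 0))
    (hfsurj : Set.Ioi (0:ℝ) ⊆ f '' Set.Ioi 0)
    (hg : ∀ t > (0:ℝ), g (f t) = t) (hg' : ∀ t > (0:ℝ), f (g t) = t)
    (hftilde : ∀ s > (0:ℝ), (∫ t in (0:ℝ)..(φ s), f t) ≤ s)
    (G : ℝ → ℝ) (hG : ∀ α > (0:ℝ), (∫ τ in (0:ℝ)..α, g τ) ≤ G α)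
    (δ α : ℝ) (hδ : 0 < δ) (hα : 0 < α) (yδ : X) (hnoise : ‖y - yδ‖ ≤ δ)
    (xad : X) (hxadM : xad ∈ M) (hlav : F xad + α • (xad - xbar) = yδ) :
    ‖xad - xdag‖ ^ 2 ≤
      δ ^ 2 / ((1 - β) ^ 2 * α ^ 2) + (2 / (1 - β)) * (G α / α) :=
  stmt_12_general F hmono y xbar xdag hsol β hβ1 φ hφpos hφzero M hvsc f g hfmono hfpos hfsurj hg
    hftilde G hG δ α hα yδ hnoise xad hxadM hlav
end

section
/- Let X be a real Hilbert space, F : X → X a monotone operator, μ ∈ (0, 1/2], and suppose the Lavrentiev-type variational source condition ⟨x† − x̄, x† − x⟩ ≤ β‖x − x†‖² + ⟨F(x) − F(x†), x − x†⟩^μ holds for all x ∈ M, where β ∈ [0,1), M ⊆ X, and F(x†) = y. Then there is a constant K > 0 depending only on β and μ such that for every δ ∈ (0,1], every yδ ∈ X with ‖y − yδ‖ ≤ δ, and every xαδ ∈ M satisfying F(xαδ) + α(xαδ − x̄) = yδ with the a priori choice α = δ^{2(1−μ)/(2−μ)}, one has the Hölder rate ‖xαδ − x†‖ ≤ K δ^{μ/(2−μ)}.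 -/
open RealInnerProductSpace

/-!
Testing the regularized equation against `e = x - x†` and inserting the source condition gives
`⟪F x - F x†, e⟫ + α (1 - β) ‖e‖² ≤ δ ‖e‖ + α ⟪F x - F x†, e⟫ ^ μ`. Weighted AM-GM absorbs the
last term into the monotonicity term on the left at the price of `α ^ (1 / (1 - μ))`, leaving
the quadratic inequality `(1 - β) ‖e‖² ≤ (δ / α) ‖e‖ + α ^ (μ / (1 - μ))`. For
`α = δ ^ (2 (1 - μ) / (2 - μ))` both `δ / α` and `√(α ^ (μ / (1 - μ)))` equal `δ ^ (μ / (2 - μ))`.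
-/

theorem le_div_add_div_sqrt_of_mul_sq_le {a b c t : ℝ} (ha : 0 < a) (hb : 0 ≤ b) (hc : 0 ≤ c)
    (h : a * t ^ 2 ≤ b * t + c ^ 2) : t ≤ b / a + c / √a := by
  set r := √a
  have hr : 0 < r := Real.sqrt_pos.2 ha
  have hr2 : r ^ 2 = a := Real.sq_sqrt ha.le
  by_contra! ht
  have hct : c / r < t := by linarith [div_nonneg hb ha.le]
  have hslope : c * r < a * t - b := by
    have hacr : a * (c / r) = c * r := by rw [← hr2]; field_simp
    have := mul_lt_mul_of_pos_left ht ha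
    rw [mul_add, mul_div_cancel₀ _ ha.ne', hacr] at this
    linarith
  -- `a t² - b t = t (a t - b) > (c / r) (c r) = c²`
  have hcr : c / r * r = c := div_mul_cancel₀ c hr.ne'
  nlinarith [mul_lt_mul_of_pos_left hslope (hct.trans_le' (by positivity)),
    mul_le_mul_of_nonneg_right hct.le (mul_nonneg hc hr.le)]

theorem mul_rpow_le_add_rpow_one_div_one_sub {α s μ : ℝ} (hα : 0 ≤ α) (hs : 0 ≤ s)
    (hμ0 : 0 ≤ μ) (hμ1 : μ < 1) : α * s ^ μ ≤ s + α ^ (1 / (1 - μ)) := by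
  have hamgm := Real.geom_mean_le_arith_mean2_weighted hμ0 (sub_nonneg.2 hμ1.le) hs
    (Real.rpow_nonneg hα (1 / (1 - μ))) (add_sub_cancel μ 1)
  rw [← Real.rpow_mul hα, one_div_mul_cancel (sub_pos.2 hμ1).ne', Real.rpow_one] at hamgm
  nlinarith [mul_nonneg (sub_nonneg.2 hμ1.le) hs,
    mul_nonneg hμ0 (Real.rpow_nonneg hα (1 / (1 - μ)))]

section Lavrentiev

variable {X : Type*} [NormedAddCommGroup X] [InnerProductSpace ℝ X]
  {F : X → X} {y yδ xbar xdag x : X} {α β δ : ℝ}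

theorem lavrentiev_inner_add_sq_le {φ : ℝ} (hsol : F xdag = y) (hnoise : ‖y - yδ‖ ≤ δ)
    (hx : F x + α • (x - xbar) = yδ) (hα : 0 ≤ α)
    (hvsc : ⟪xdag - xbar, xdag - x⟫ ≤ β * ‖x - xdag‖ ^ 2 + φ) :
    ⟪F x - F xdag, x - xdag⟫ + α * (1 - β) * ‖x - xdag‖ ^ 2 ≤ δ * ‖x - xdag‖ + α * φ := by
  have htest : ⟪F x - F xdag, x - xdag⟫ + α * ⟪x - xbar, x - xdag⟫ = ⟪yδ - y, x - xdag⟫ := by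
    rw [← real_inner_smul_left, ← inner_add_left, ← hsol, ← hx]
    congr 1
    abel
  have hsplit : ⟪x - xbar, x - xdag⟫ = ‖x - xdag‖ ^ 2 - ⟪xdag - xbar, xdag - x⟫ := by
    rw [show x - xbar = (x - xdag) + (xdag - xbar) by abel, inner_add_left,
      real_inner_self_eq_norm_sq, ← neg_sub x xdag, inner_neg_right]
    ring
  have hnoise' : ⟪yδ - y, x - xdag⟫ ≤ δ * ‖x - xdag‖ :=
    (real_inner_le_norm _ _).trans
      (mul_le_mul_of_nonneg_right (by rwa [norm_sub_rev]) (norm_nonneg _))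
  nlinarith [mul_le_mul_of_nonneg_left hvsc hα]

theorem lavrentiev_sq_le_of_vsc_rpow {μ : ℝ} (hsol : F xdag = y) (hnoise : ‖y - yδ‖ ≤ δ)
    (hx : F x + α • (x - xbar) = yδ) (hα : 0 < α) (hμ0 : 0 ≤ μ) (hμ1 : μ < 1)
    (hmono : 0 ≤ ⟪F x - F xdag, x - xdag⟫)
    (hvsc : ⟪xdag - xbar, xdag - x⟫ ≤
      β * ‖x - xdag‖ ^ 2 + ⟪F x - F xdag, x - xdag⟫ ^ μ) :
    (1 - β) * ‖x - xdag‖ ^ 2 ≤ δ / α * ‖x - xdag‖ + α ^ (μ / (1 - μ)) := by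
  have hest := lavrentiev_inner_add_sq_le hsol hnoise hx hα.le hvsc
  have hamgm := mul_rpow_le_add_rpow_one_div_one_sub hα.le hmono hμ0 hμ1
  have hsplit : α ^ (1 / (1 - μ)) = α * α ^ (μ / (1 - μ)) := by
    rw [← Real.rpow_one_add' hα.le (by positivity)]
    congr 1
    field_simp [(sub_pos.2 hμ1).ne']
    ring
  refine le_of_mul_le_mul_left ?_ hα
  rw [mul_add, ← mul_assoc α (δ / α), mul_div_cancel₀ _ hα.ne']
  linarith

end Lavrentiev

theorem stmt_13_general {X : Type*} [NormedAddCommGroup X] [InnerProductSpace ℝ X]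
    (F : X → X) (hmono : ∀ x x' : X, 0 ≤ ⟪F x - F x', x - x'⟫)
    (y xbar xdag : X) (hsol : F xdag = y)
    (μ : ℝ) (hμ0 : 0 < μ) (hμ1 : μ ≤ 1 / 2)
    (β : ℝ) (hβ1 : β < 1)
    (M : Set X)
    (hvsc : ∀ x ∈ M,
      ⟪xdag - xbar, xdag - x⟫ ≤ β * ‖x - xdag‖ ^ 2 + ⟪F x - F xdag, x - xdag⟫ ^ μ) :
    ∃ K : ℝ, 0 < K ∧ ∀ δ : ℝ, 0 < δ → δ ≤ 1 → ∀ yδ : X, ‖y - yδ‖ ≤ δ →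
      ∀ xad ∈ M, F xad + (δ ^ (2 * (1 - μ) / (2 - μ))) • (xad - xbar) = yδ →
        ‖xad - xdag‖ ≤ K * δ ^ (μ / (2 - μ)) := by
  have hβ : 0 < 1 - β := sub_pos.2 hβ1
  refine ⟨1 / (1 - β) + 1 / √(1 - β), by positivity, ?_⟩
  intro δ hδ _ yδ hnoise x hx hreg
  have h2μ : 2 - μ ≠ 0 := by linarith
  have h1μ : 1 - μ ≠ 0 := by linarith
  have hratio : δ / δ ^ (2 * (1 - μ) / (2 - μ)) = δ ^ (μ / (2 - μ)) := by
    rw [show μ / (2 - μ) = 1 - 2 * (1 - μ) / (2 - μ) by field_simp; ring, Real.rpow_sub hδ,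
      Real.rpow_one]
  have hpow : (δ ^ (2 * (1 - μ) / (2 - μ))) ^ (μ / (1 - μ)) = (δ ^ (μ / (2 - μ))) ^ 2 := by
    rw [← Real.rpow_mul hδ.le, ← Real.rpow_natCast, ← Real.rpow_mul hδ.le]
    congr 1
    field_simp
    ring
  have hquad := lavrentiev_sq_le_of_vsc_rpow hsol hnoise hreg (Real.rpow_pos_of_pos hδ _)
    hμ0.le (by linarith) (hmono x xdag) (hvsc x hx)
  rw [hratio, hpow] at hquad
  calc ‖x - xdag‖ ≤ δ ^ (μ / (2 - μ)) / (1 - β) + δ ^ (μ / (2 - μ)) / √(1 - β) :=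
        le_div_add_div_sqrt_of_mul_sq_le hβ (by positivity) (by positivity) hquad
    _ = (1 / (1 - β) + 1 / √(1 - β)) * δ ^ (μ / (2 - μ)) := by ring

/-- Hölder rate under the Lavrentiev-type variational source condition with φ(t) = t^μ,
μ ∈ (0,1/2]: with the a priori choice α = δ^{2(1−μ)/(2−μ)} one gets
‖x_α^δ − x†‖ = O(δ^{μ/(2−μ)}). -/
theorem stmt_13 {X : Type*} [NormedAddCommGroup X] [InnerProductSpace ℝ X] [CompleteSpace X]
    (F : X → X) (hmono : ∀ x x' : X, 0 ≤ ⟪F x - F x', x - x'⟫)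
    (y xbar xdag : X) (hsol : F xdag = y)
    (μ : ℝ) (hμ0 : 0 < μ) (hμ1 : μ ≤ 1 / 2)
    (β : ℝ) (hβ0 : 0 ≤ β) (hβ1 : β < 1)
    (M : Set X)
    (hvsc : ∀ x ∈ M,
      ⟪xdag - xbar, xdag - x⟫ ≤ β * ‖x - xdag‖ ^ 2 + ⟪F x - F xdag, x - xdag⟫ ^ μ) :
    ∃ K : ℝ, 0 < K ∧ ∀ δ : ℝ, 0 < δ → δ ≤ 1 → ∀ yδ : X, ‖y - yδ‖ ≤ δ →
      ∀ xad ∈ M, F xad + (δ ^ (2 * (1 - μ) / (2 - μ))) • (xad - xbar) = yδ →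
        ‖xad - xdag‖ ≤ K * δ ^ (μ / (2 - μ)) :=
  stmt_13_general F hmono y xbar xdag hsol μ hμ0 hμ1 β hβ1 M hvsc
end

section
/- Let X be a real Hilbert space, F : X → X a monotone operator, and suppose that for all x ∈ M one has γ_x := ⟨F(x) − F(x†), x − x†⟩ < e^{-1} and the logarithmic Lavrentiev-type variational source condition ⟨x† − x̄, x† − x⟩ ≤ β‖x − x†‖² + φ(γ_x), where φ(t) = 1/(−ln t) for t ∈ (0,1) and φ(0) = 0, β ∈ [0,1), M ⊆ X, and F(x†) = y. Then there exist K > 0 and δ₀ ∈ (0,1) such that for every δ ∈ (0, δ₀], every yδ ∈ X with ‖y − yδ‖ ≤ δ, and every xαδ ∈ M satisfying F(xαδ) + α(xαδ − x̄) = yδ with the a priori choice α = √δ, one has the logarithmic rate ‖xαδ − x†‖ ≤ K/√(−ln δ). -/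
/-!
Pairing the Lavrentiev equation with `x - x†` and using the source condition gives
`γ + α (1 - β) ‖x - x†‖² ≤ δ ‖x - x†‖ + α φ(γ)` with `γ = ⟪F x - F x†, x - x†⟫ ∈ [0, e⁻¹)`,
so `φ(γ) ≤ 1`. For `α = √δ` this bounds the error by `2 / (1 - β)`, hence the residual by
`γ ≤ 3α / (1 - β) ≤ δ^{1/4}` once `δ ≤ ((1 - β) / 3)^4`. As `φ` is increasing,
`φ(γ) ≤ φ(δ^{1/4}) = 4 / (-ln δ)`, and the quadratic inequality for `‖x - x†‖ √(-ln δ)`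
gives the rate.
-/

open Real RealInnerProductSpace

namespace Lavrentiev

theorem inner_add_mul_norm_sq_le {X : Type*} [NormedAddCommGroup X] [InnerProductSpace ℝ X]
    {F : X → X} {x xdag xbar y yδ : X} {α δ : ℝ}
    (hsol : F xdag = y) (hx : F x + α • (x - xbar) = yδ) (hy : ‖y - yδ‖ ≤ δ) :
    ⟪F x - F xdag, x - xdag⟫ + α * ‖x - xdag‖ ^ 2 ≤
      δ * ‖x - xdag‖ + α * ⟪xdag - xbar, xdag - x⟫ := by
  have hdecomp : yδ - y = (F x - F xdag) + α • (x - xdag) + α • (xdag - xbar) := by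
    rw [← hx, ← hsol]; module
  have hpair : ⟪yδ - y, x - xdag⟫ =
      ⟪F x - F xdag, x - xdag⟫ + α * ‖x - xdag‖ ^ 2 - α * ⟪xdag - xbar, xdag - x⟫ := by
    have hflip : ⟪xdag - xbar, x - xdag⟫ = -⟪xdag - xbar, xdag - x⟫ := by
      rw [← inner_neg_right, neg_sub]
    simp only [hdecomp, inner_add_left, real_inner_smul_left, real_inner_self_eq_norm_sq, hflip]
    ring
  have hcs : ⟪yδ - y, x - xdag⟫ ≤ δ * ‖x - xdag‖ :=
    (real_inner_le_norm _ _).trans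
      (mul_le_mul_of_nonneg_right (by rwa [norm_sub_rev]) (norm_nonneg _))
  linarith

theorem one_div_neg_log_nonneg {t : ℝ} (h0 : 0 ≤ t) (h1 : t ≤ 1) : 0 ≤ 1 / -log t :=
  one_div_nonneg.2 (neg_nonneg.2 (log_nonpos h0 h1))

theorem one_div_neg_log_le_of_le {s t : ℝ} (ht : 0 ≤ t) (hts : t ≤ s) (hs : s < 1) :
    1 / -log t ≤ 1 / -log s := by
  rcases ht.eq_or_lt with rfl | ht
  · simpa using one_div_neg_log_nonneg (ht.trans hts) hs.le
  · exact one_div_le_one_div_of_le (neg_pos.2 (log_neg (ht.trans_le hts) hs))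
      (neg_le_neg (log_le_log ht hts))

theorem mul_le_of_mul_sq_le {c a b w : ℝ} (hc : c ≤ 1) (hw : 0 ≤ w) (hb : 0 ≤ b)
    (hab : 1 ≤ a + b) (h : c * w ^ 2 ≤ a * w + b) : c * w ≤ a + b := by
  rcases le_or_gt w 1 with hw1 | hw1
  · nlinarith
  · refine le_of_mul_le_mul_right ?_ (zero_lt_one.trans hw1)
    nlinarith

theorem mul_sq_le_of_add_mul_sq_le {c α e γ φ : ℝ} (hα : 0 < α) (hγ : 0 ≤ γ)
    (h : γ + α * c * e ^ 2 ≤ α ^ 2 * e + α * φ) : c * e ^ 2 ≤ α * e + φ :=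
  le_of_mul_le_mul_left (by linarith) hα

theorem le_sqrt_of_add_mul_sq_le {c α e γ φ : ℝ} (hc : 0 < c) (hc1 : c ≤ 1) (hα : 0 < α)
    (hαc : α ≤ (c / 3) ^ 2) (he : 0 ≤ e) (hγ : 0 ≤ γ) (hφ0 : 0 ≤ φ) (hφ1 : φ ≤ 1)
    (h : γ + α * c * e ^ 2 ≤ α ^ 2 * e + α * φ) :
    γ ≤ √α := by
  have hα1 : α ≤ 1 := hαc.trans (by nlinarith)
  have hce : c * e ≤ 2 := by
    have hquad := mul_sq_le_of_add_mul_sq_le hα hγ h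
    have := mul_le_of_mul_sq_le (a := 1) (b := 1) hc1 he zero_le_one (by norm_num)
      (by nlinarith)
    linarith
  have hγ' : γ ≤ α ^ 2 * e + α * φ := by
    nlinarith [mul_nonneg (mul_nonneg hα.le hc.le) (sq_nonneg e)]
  have hsqrt : 3 * √α ≤ c := by
    have := (sqrt_le_left (by positivity)).2 hαc
    linarith
  have hcγ : c * γ ≤ c * √α :=
    calc c * γ ≤ c * (α ^ 2 * e + α * φ) := by gcongr
      _ = α ^ 2 * (c * e) + c * α * φ := by ring
      _ ≤ α * 2 + 1 * α * 1 := by gcongr; nlinarith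
      _ = √α * (3 * √α) := by linear_combination (-3) * mul_self_sqrt hα.le
      _ ≤ c * √α := by rw [mul_comm]; gcongr
  exact le_of_mul_le_mul_left hcγ hc

theorem one_div_neg_log_mul_neg_log_sq_le {t α : ℝ} (ht : 0 ≤ t) (htα : t ≤ √α) (hα : 0 < α)
    (hα1 : α < 1) : 1 / -log t * -log (α ^ 2) ≤ 4 := by
  set L := -log (α ^ 2)
  have hL : 0 < L := neg_pos.2 (log_neg (by positivity) (by nlinarith))
  have hlog : -log √α = L / 4 := by simp only [L, log_sqrt hα.le, log_pow]; push_cast; ring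
  have := one_div_neg_log_le_of_le ht htα ((sqrt_lt' one_pos).2 (by linarith))
  rw [hlog] at this
  calc 1 / -log t * L ≤ 1 / (L / 4) * L := by gcongr
    _ = 4 := by field_simp

theorem mul_neg_log_le_one {t : ℝ} (ht : 0 ≤ t) : t * -log t ≤ 1 := by
  linarith [self_sub_one_le_mul_log ht, mul_neg t (log t)]

theorem le_div_sqrt_neg_log_of_add_mul_sq_le {c α e γ : ℝ} (hc : 0 < c) (hc1 : c ≤ 1)
    (hα : 0 < α) (hαc : α ≤ (c / 3) ^ 2) (he : 0 ≤ e) (hγ0 : 0 ≤ γ) (hγ1 : γ < exp (-1))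
    (h : γ + α * c * e ^ 2 ≤ α ^ 2 * e + α * (1 / -log γ)) :
    e ≤ 5 / c / √(-log (α ^ 2)) := by
  set φ := 1 / -log γ
  set L := -log (α ^ 2)
  have hα1 : α < 1 := hαc.trans_lt (by nlinarith)
  have hL : 0 < L := neg_pos.2 (log_neg (by positivity) (by nlinarith))
  have hφ0 : 0 ≤ φ := one_div_neg_log_nonneg hγ0 (hγ1.le.trans (exp_le_one_iff.2 (by norm_num)))
  have hφ1 : φ ≤ 1 := by
    have := one_div_neg_log_le_of_le hγ0 hγ1.le (exp_lt_one_iff.2 (by norm_num))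
    rwa [log_exp, neg_neg, div_one] at this
  have hφL : φ * L ≤ 4 := one_div_neg_log_mul_neg_log_sq_le hγ0
    (le_sqrt_of_add_mul_sq_le hc hc1 hα hαc he hγ0 hφ0 hφ1 h) hα hα1
  have hαL : α * √L ≤ 1 := by
    nlinarith [mul_neg_log_le_one (sq_nonneg α), sq_sqrt hL.le, sqrt_nonneg L]
  have hquad := mul_sq_le_of_add_mul_sq_le hα hγ0 h
  have hsq : c * (e * √L) ^ 2 ≤ 1 * (e * √L) + 4 :=
    calc c * (e * √L) ^ 2 = c * e ^ 2 * L := by rw [mul_pow, sq_sqrt hL.le]; ring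
      _ ≤ (α * e + φ) * L := by gcongr
      _ = (α * √L) * (e * √L) + φ * L := by rw [mul_mul_mul_comm, mul_self_sqrt hL.le]; ring
      _ ≤ 1 * (e * √L) + 4 := by gcongr
  have hrate := mul_le_of_mul_sq_le hc1 (by positivity) (by norm_num) (by norm_num) hsq
  rw [div_div, le_div_iff₀ (by positivity)]
  linarith

end Lavrentiev

open Lavrentiev in
theorem stmt_14_general {X : Type*} [NormedAddCommGroup X] [InnerProductSpace ℝ X]
    (F : X → X) (hmono : ∀ x x' : X, 0 ≤ ⟪F x - F x', x - x'⟫)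
    (y xbar xdag : X) (hsol : F xdag = y)
    (β : ℝ) (hβ0 : 0 ≤ β) (hβ1 : β < 1)
    (M : Set X)
    (hsmall : ∀ x ∈ M, ⟪F x - F xdag, x - xdag⟫ < Real.exp (-1))
    (hvsc : ∀ x ∈ M,
      ⟪xdag - xbar, xdag - x⟫ ≤
        β * ‖x - xdag‖ ^ 2 + 1 / (-Real.log ⟪F x - F xdag, x - xdag⟫)) :
    ∃ K : ℝ, 0 < K ∧ ∃ δ₀ ∈ Set.Ioo (0:ℝ) 1,
      ∀ δ : ℝ, 0 < δ → δ ≤ δ₀ → ∀ yδ : X, ‖y - yδ‖ ≤ δ →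
        ∀ xad ∈ M, F xad + Real.sqrt δ • (xad - xbar) = yδ →
          ‖xad - xdag‖ ≤ K / Real.sqrt (-Real.log δ) := by
  have hc : 0 < 1 - β := by linarith
  have hc3 : (1 - β) / 3 < 1 := by linarith
  refine ⟨5 / (1 - β), by positivity, ((1 - β) / 3) ^ 4,
    ⟨by positivity, pow_lt_one₀ (by positivity) hc3 (by norm_num)⟩, ?_⟩
  intro δ hδ hδ₀ yδ hy x hx hxeq
  have hbasic := inner_add_mul_norm_sq_le hsol hxeq hy
  have hsource := mul_le_mul_of_nonneg_left (hvsc x hx) (sqrt_nonneg δ)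
  set α := √δ
  have hδα : δ = α ^ 2 := (sq_sqrt hδ.le).symm
  have hα : α ≤ ((1 - β) / 3) ^ 2 := by
    rw [sqrt_le_left (by positivity)]; linarith
  rw [hδα] at hbasic ⊢
  refine le_div_sqrt_neg_log_of_add_mul_sq_le hc (by linarith) (sqrt_pos.2 hδ) hα (norm_nonneg _)
    (hmono x xdag) (hsmall x hx) ?_
  linarith

/-- Logarithmic rate under the logarithmic Lavrentiev-type variational source condition
φ(t) = 1/(−ln t) (with φ(0) = 0; note that in Lean `Real.log 0 = 0`, so
`1 / (-Real.log t)` extends φ by 0 at t = 0): with the a priori choice α = √δ one gets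
‖x_α^δ − x†‖ = O(1/√(−ln δ)). -/
theorem stmt_14 {X : Type*} [NormedAddCommGroup X] [InnerProductSpace ℝ X] [CompleteSpace X]
    (F : X → X) (hmono : ∀ x x' : X, 0 ≤ ⟪F x - F x', x - x'⟫)
    (y xbar xdag : X) (hsol : F xdag = y)
    (β : ℝ) (hβ0 : 0 ≤ β) (hβ1 : β < 1)
    (M : Set X)
    (hsmall : ∀ x ∈ M, ⟪F x - F xdag, x - xdag⟫ < Real.exp (-1))
    (hvsc : ∀ x ∈ M,
      ⟪xdag - xbar, xdag - x⟫ ≤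
        β * ‖x - xdag‖ ^ 2 + 1 / (-Real.log ⟪F x - F xdag, x - xdag⟫)) :
    ∃ K : ℝ, 0 < K ∧ ∃ δ₀ ∈ Set.Ioo (0:ℝ) 1,
      ∀ δ : ℝ, 0 < δ → δ ≤ δ₀ → ∀ yδ : X, ‖y - yδ‖ ≤ δ →
        ∀ xad ∈ M, F xad + Real.sqrt δ • (xad - xbar) = yδ →
          ‖xad - xdag‖ ≤ K / Real.sqrt (-Real.log δ) :=
  stmt_14_general F hmono y xbar xdag hsol β hβ0 hβ1 M hsmall hvsc
end

section
/- Let X be a real Hilbert space, F : X → X, and let x†, x̄, y, yδ ∈ X with F(x†) = y and ‖y − yδ‖ ≤ δ for some δ > 0. Let α > 0 and let xαδ ∈ X satisfy F(xαδ) + α(xαδ − x̄) = yδ. Suppose A : X → X is a bounded linear accretive operator and M : X → X is a bounded linear operator such that F(xαδ) − F(x†) = A M (xαδ − x†) with ‖M − I‖ ≤ c for some c ∈ [0,1). Suppose further that x† − x̄ = A w_R + r_R for some w_R, r_R ∈ X with ‖w_R‖ ≤ R and ‖r_R‖ ≤ d. Then ‖xαδ − x†‖ ≤ (1/(1 − c))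 (δ/α + α R + d). In particular, under the benchmark source condition x† − x̄ = A w (i.e. R = ‖w‖, d = 0) and the parameter choice δ/τ ≤ α² ≤ τδ with τ ≥ 1, one obtains ‖xαδ − x†‖ ≤ (1/(1 − c)) (τ + ‖w‖) √(τ δ). -/
/-!
Put `e = x_α^δ - x†`. Subtracting `F x† = y` from the Lavrentiev equation and inserting the
range invariance and source conditions gives
`(A + αI) e = (yδ - y - α r_R) - A ((M - I) e + α w_R)`.
For accretive `A` the resolvent `(A + αI)⁻¹` has norm at most `1/α` and `(A + αI)⁻¹ A` has
norm at most `1`, so `‖e‖ ≤ (δ + α d)/α + c ‖e‖ + α R`, and `c < 1` lets the `c ‖e‖` term be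
absorbed. The rate follows by taking `r_R = 0` and using `α ≤ √(τδ)` and `δ ≤ τ α²`.
-/

open RealInnerProductSpace

section Accretive

variable {X : Type*} [NormedAddCommGroup X] [InnerProductSpace ℝ X] {A : X →L[ℝ] X} {α : ℝ}

theorem inner_comp_add_smul_id_apply (v w : X) :
    (innerSL ℝ).comp (A + α • ContinuousLinearMap.id ℝ X) v w = ⟪A v, w⟫ + α * ⟪v, w⟫ := by
  simp

theorem isCoercive_inner_comp_add_smul_id (hacc : ∀ x, 0 ≤ ⟪A x, x⟫) (hα : 0 < α) :
    IsCoercive ((innerSL ℝ).comp (A + α • ContinuousLinearMap.id ℝ X)) := by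
  refine ⟨α, hα, fun u => ?_⟩
  rw [inner_comp_add_smul_id_apply, real_inner_self_eq_norm_mul_norm, mul_assoc]
  linarith [hacc u]

theorem exists_add_smul_eq_of_accretive [CompleteSpace X] (hacc : ∀ x, 0 ≤ ⟪A x, x⟫)
    (hα : 0 < α) (u : X) : ∃ x, A x + α • x = u := by
  set E := (isCoercive_inner_comp_add_smul_id hacc hα).continuousLinearEquivOfBilin
  refine ⟨E.symm u, ext_inner_right ℝ fun w => ?_⟩
  conv_rhs => rw [← E.apply_symm_apply u]
  rw [IsCoercive.continuousLinearEquivOfBilin_apply, inner_comp_add_smul_id_apply,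
    inner_add_left, real_inner_smul_left]

theorem mul_norm_le_of_add_smul_eq (hacc : ∀ x, 0 ≤ ⟪A x, x⟫) {x u : X}
    (h : A x + α • x = u) : α * ‖x‖ ≤ ‖u‖ := by
  have hinner : α * (‖x‖ * ‖x‖) ≤ ‖u‖ * ‖x‖ := calc
    α * (‖x‖ * ‖x‖) ≤ ⟪A x, x⟫ + α * ⟪x, x⟫ := by
      rw [real_inner_self_eq_norm_mul_norm]; linarith [hacc x]
    _ = ⟪u, x⟫ := by rw [← h, inner_add_left, real_inner_smul_left]
    _ ≤ ‖u‖ * ‖x‖ := real_inner_le_norm u x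
  rcases (norm_nonneg x).eq_or_lt with hx | hx
  · rw [← hx, mul_zero]; exact norm_nonneg u
  · exact le_of_mul_le_mul_right (by linarith) hx

/-- `‖(A + αI)⁻¹ A‖ ≤ 1`: pair `A (x - v) = -α x` with `x - v` and use accretivity. -/
theorem norm_le_of_add_smul_eq_apply (hacc : ∀ x, 0 ≤ ⟪A x, x⟫) (hα : 0 < α) {x v : X}
    (h : A x + α • x = A v) : ‖x‖ ≤ ‖v‖ := by
  have hAdiff : A (x - v) = -(α • x) := by rw [map_sub, ← h]; abel
  have hpair : α * (‖x‖ * ‖x‖) ≤ α * ⟪x, v⟫ := by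
    have := hacc (x - v)
    rw [hAdiff, inner_neg_left, real_inner_smul_left, inner_sub_right,
      real_inner_self_eq_norm_mul_norm] at this
    linarith
  have hinner : ‖x‖ * ‖x‖ ≤ ‖x‖ * ‖v‖ :=
    (le_of_mul_le_mul_left hpair hα).trans (real_inner_le_norm x v)
  nlinarith [norm_nonneg x, norm_nonneg v]

theorem mul_norm_le_of_add_smul_eq_add_apply [CompleteSpace X] (hacc : ∀ x, 0 ≤ ⟪A x, x⟫)
    (hα : 0 < α) {x u v : X} (h : A x + α • x = u + A v) : α * ‖x‖ ≤ ‖u‖ + α * ‖v‖ := by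
  obtain ⟨x₁, hx₁⟩ := exists_add_smul_eq_of_accretive hacc hα u
  have hx₂ : A (x - x₁) + α • (x - x₁) = A v := by
    rw [map_sub, smul_sub, sub_add_sub_comm, h, hx₁, add_sub_cancel_left]
  calc α * ‖x‖ = α * ‖x₁ + (x - x₁)‖ := by rw [add_sub_cancel]
    _ ≤ α * ‖x₁‖ + α * ‖x - x₁‖ := by rw [← mul_add]; gcongr; exact norm_add_le _ _
    _ ≤ ‖u‖ + α * ‖v‖ := by
      gcongr
      · exact mul_norm_le_of_add_smul_eq hacc hx₁
      · exact norm_le_of_add_smul_eq_apply hacc hα hx₂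

end Accretive

theorem norm_le_of_lavrentiev_eq {X : Type*} [NormedAddCommGroup X] [InnerProductSpace ℝ X]
    [CompleteSpace X] {A M : X →L[ℝ] X} (hacc : ∀ x, 0 ≤ ⟪A x, x⟫) {α c δ R d : ℝ} (hα : 0 < α)
    (hM : ‖M - ContinuousLinearMap.id ℝ X‖ ≤ c) (hc1 : c < 1) {e f x₀ w r : X}
    (h : A (M e) + α • (e + x₀) = f) (hsrc : x₀ = A w + r)
    (hf : ‖f‖ ≤ δ) (hw : ‖w‖ ≤ R) (hr : ‖r‖ ≤ d) :
    ‖e‖ ≤ 1 / (1 - c) * (δ / α + α * R + d) := by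
  set D := M - ContinuousLinearMap.id ℝ X
  have hres : A e + α • e = (f - α • r) + A (-(D e + α • w)) := by
    rw [← h, hsrc]
    simp only [D, map_neg, map_add, map_smul, sub_apply,
      ContinuousLinearMap.id_apply, map_sub, smul_add]
    abel
  have hbound := mul_norm_le_of_add_smul_eq_add_apply hacc hα hres
  have hfr : ‖f - α • r‖ ≤ δ + α * d := by
    refine (norm_sub_le _ _).trans ?_
    rw [norm_smul, Real.norm_of_nonneg hα.le]
    gcongr
  have hDw : ‖-(D e + α • w)‖ ≤ c * ‖e‖ + α * R := by
    rw [norm_neg]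
    refine (norm_add_le _ _).trans ?_
    rw [norm_smul, Real.norm_of_nonneg hα.le]
    gcongr
    exact (D.le_opNorm e).trans (by gcongr)
  have hsum : α * ((1 - c) * ‖e‖) ≤ α * (δ / α + α * R + d) := by
    rw [mul_add, mul_add, mul_div_cancel₀ _ hα.ne']
    nlinarith
  rw [div_mul_eq_mul_div, one_mul, le_div_iff₀ (by linarith), mul_comm]
  exact le_of_mul_le_mul_left hsum hα

theorem div_add_mul_le_add_mul_sqrt {δ α τ W : ℝ} (hα : 0 < α) (hτ : 1 ≤ τ) (hW : 0 ≤ W)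
    (hlow : δ / τ ≤ α ^ 2) (hup : α ^ 2 ≤ τ * δ) :
    δ / α + α * W ≤ (τ + W) * √(τ * δ) := by
  have hαs : α ≤ √(τ * δ) := Real.le_sqrt_of_sq_le hup
  have hδ : δ ≤ τ * α * √(τ * δ) := calc
    δ ≤ τ * α ^ 2 := (div_le_iff₀' (by linarith)).1 hlow
    _ = τ * α * α := by ring
    _ ≤ τ * α * √(τ * δ) := by gcongr
  have hδα : δ / α ≤ τ * √(τ * δ) := by
    rw [div_le_iff₀ hα]; linarith
  have hαW : α * W ≤ √(τ * δ) * W := by gcongr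
  linarith

theorem stmt_16_general {X : Type*} [NormedAddCommGroup X] [InnerProductSpace ℝ X] [CompleteSpace X]
    (F : X → X) (y yδ xbar xdag xad : X) (δ α : ℝ) (hα : 0 < α)
    (hsol : F xdag = y) (hnoise : ‖y - yδ‖ ≤ δ)
    (hlav : F xad + α • (xad - xbar) = yδ)
    (A M : X →L[ℝ] X) (hacc : ∀ x : X, 0 ≤ ⟪A x, x⟫)
    (hinv : F xad - F xdag = A (M (xad - xdag)))
    (c : ℝ) (hc1 : c < 1)
    (hM : ‖M - ContinuousLinearMap.id ℝ X‖ ≤ c)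
    (wR rR : X) (R d : ℝ) (hsc : xdag - xbar = A wR + rR)
    (hwR : ‖wR‖ ≤ R) (hrR : ‖rR‖ ≤ d) :
    ‖xad - xdag‖ ≤ (1 / (1 - c)) * (δ / α + α * R + d) ∧
      ∀ w : X, ∀ τ : ℝ, 1 ≤ τ → xdag - xbar = A w →
        δ / τ ≤ α ^ 2 → α ^ 2 ≤ τ * δ →
          ‖xad - xdag‖ ≤ (1 / (1 - c)) * (τ + ‖w‖) * Real.sqrt (τ * δ) := by
  have herr : A (M (xad - xdag)) + α • ((xad - xdag) + (xdag - xbar)) = yδ - y := by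
    rw [← hinv, sub_add_sub_cancel, ← hlav, ← hsol]; abel
  have hf : ‖yδ - y‖ ≤ δ := norm_sub_rev y yδ ▸ hnoise
  refine ⟨norm_le_of_lavrentiev_eq hacc hα hM hc1 herr hsc hf hwR hrR,
    fun w τ hτ hsrc hlow hup => ?_⟩
  calc ‖xad - xdag‖ ≤ 1 / (1 - c) * (δ / α + α * ‖w‖ + 0) :=
        norm_le_of_lavrentiev_eq hacc hα hM hc1 herr (hsrc.trans (add_zero _).symm) hf le_rfl
          norm_zero.le
    _ ≤ 1 / (1 - c) * ((τ + ‖w‖) * √(τ * δ)) := by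
        rw [add_zero]
        exact mul_le_mul_of_nonneg_left
          (div_add_mul_le_add_mul_sqrt hα hτ (norm_nonneg w) hlow hup)
          (one_div_nonneg.2 (by linarith))
    _ = 1 / (1 - c) * (τ + ‖w‖) * Real.sqrt (τ * δ) := (mul_assoc _ _ _).symm

/-- Error estimate for Lavrentiev regularization under a range invariance condition
(with N ≡ 0) and an (approximate) source condition x†−x̄ = Aw_R + r_R:
‖x_α^δ − x†‖ ≤ (1/(1−c))(δ/α + αR + d); in particular, under the benchmark source
condition x†−x̄ = Aw and the parameter choice δ/τ ≤ α² ≤ τδ one obtains the rate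
‖x_α^δ − x†‖ ≤ (1/(1−c))(τ + ‖w‖)√(τδ). -/
theorem stmt_16 {X : Type*} [NormedAddCommGroup X] [InnerProductSpace ℝ X] [CompleteSpace X]
    (F : X → X) (y yδ xbar xdag xad : X) (δ α : ℝ) (hδ : 0 < δ) (hα : 0 < α)
    (hsol : F xdag = y) (hnoise : ‖y - yδ‖ ≤ δ)
    (hlav : F xad + α • (xad - xbar) = yδ)
    (A M : X →L[ℝ] X) (hacc : ∀ x : X, 0 ≤ ⟪A x, x⟫)
    (hinv : F xad - F xdag = A (M (xad - xdag)))
    (c : ℝ) (hc0 : 0 ≤ c) (hc1 : c < 1)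
    (hM : ‖M - ContinuousLinearMap.id ℝ X‖ ≤ c)
    (wR rR : X) (R d : ℝ) (hsc : xdag - xbar = A wR + rR)
    (hwR : ‖wR‖ ≤ R) (hrR : ‖rR‖ ≤ d) :
    ‖xad - xdag‖ ≤ (1 / (1 - c)) * (δ / α + α * R + d) ∧
      ∀ w : X, ∀ τ : ℝ, 1 ≤ τ → xdag - xbar = A w →
        δ / τ ≤ α ^ 2 → α ^ 2 ≤ τ * δ →
          ‖xad - xdag‖ ≤ (1 / (1 - c)) * (τ + ‖w‖) * Real.sqrt (τ * δ) :=
  stmt_16_general F y yδ xbar xdag xad δ α hα hsol hnoise hlav A M hacc hinv c hc1 hM wR rR R d hsc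
    hwR hrR
end

section
/- Let X be a real Hilbert space, A : X → X a bounded linear accretive operator, α > 0, ρ > 0, x†, x̄ ∈ X, and let M be a map from the closed ball B̄_ρ(x†) = {z ∈ X : ‖z − x†‖ ≤ ρ} into the bounded linear operators on X such that ‖M(z) − I‖ ≤ c for all z ∈ B̄_ρ(x†) with some c ∈ [0,1), ‖M(z) − M(z̃)‖ ≤ L_M ‖z − z̃‖ for all z, z̃ ∈ B̄_ρ(x†), ‖x̄ − x†‖ ≤ (1 − c)ρ, and c + L_M ρ < 1. Then there exists a unique z ∈ B̄_ρ(x†) satisfying (A M(z) + αI)(z − x†) + α(x† − x̄) = 0. -/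
/-!
Write `M z = I + N z`. Since `A + αI` is invertible (Lax–Milgram: `⟪(A + αI) x, x⟫ ≥ α ‖x‖²`),
the equation says that `z` is a fixed point of
`Φ z = x† + (A + αI)⁻¹ (α (x̄ - x†) - A N(z) (z - x†))`.
Accretivity gives `‖(A + αI)⁻¹ α‖ ≤ 1` and `‖(A + αI)⁻¹ A‖ ≤ 1` (the latter because `A` commutes
with `A + αI`), so `Φ` maps `B̄_ρ(x†)` into itself, as `(1 - c) ρ + c ρ = ρ`, and is Lipschitz there
with constant `c + L_M ρ < 1`. Banach's fixed point theorem concludes.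
-/

open RealInnerProductSpace

open Function Set in
theorem existsUnique_isFixedPt_of_lipschitzOnWith {α : Type*} [MetricSpace α] {s : Set α}
    (hsc : IsComplete s) (hne : s.Nonempty) {f : α → α} (hsf : MapsTo f s s) {K : NNReal}
    (hK : K < 1) (hf : LipschitzOnWith K f s) : ∃! x, x ∈ s ∧ IsFixedPt f x := by
  have := hsc.completeSpace_coe
  have := hne.to_subtype
  have hc : ContractingWith K (hsf.restrict f s s) :=
    ⟨hK, LipschitzWith.of_dist_le_mul fun x y => hf.dist_le_mul x x.2 y y.2⟩
  refine ⟨hc.fixedPoint, ⟨Subtype.prop _, congrArg Subtype.val hc.fixedPoint_isFixedPt⟩, ?_⟩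
  rintro x ⟨hx, hfx⟩
  exact congrArg Subtype.val (hc.fixedPoint_unique (x := ⟨x, hx⟩) (Subtype.ext hfx))

open Metric in
theorem norm_apply_sub_sub_apply_sub_le {𝕜 E F : Type*} [NontriviallyNormedField 𝕜]
    [NormedAddCommGroup E] [NormedSpace 𝕜 E] [NormedAddCommGroup F] [NormedSpace 𝕜 F]
    {N : E → E →L[𝕜] F} {x₀ : E} {ρ c L : ℝ}
    (hN : ∀ z ∈ closedBall x₀ ρ, ‖N z‖ ≤ c)
    (hNLip : ∀ z ∈ closedBall x₀ ρ, ∀ z' ∈ closedBall x₀ ρ, ‖N z - N z'‖ ≤ L * ‖z - z'‖)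
    {z z' : E} (hz : z ∈ closedBall x₀ ρ) (hz' : z' ∈ closedBall x₀ ρ) :
    ‖N z (z - x₀) - N z' (z' - x₀)‖ ≤ (c + L * ρ) * ‖z - z'‖ := by
  have hsplit : N z (z - x₀) - N z' (z' - x₀) = N z (z - z') + (N z - N z') (z' - x₀) := by
    simp only [sub_apply, map_sub]; abel
  rw [hsplit, add_mul, mul_right_comm]
  refine (norm_add_le _ _).trans (add_le_add ?_ ?_)
  · exact (N z).le_of_opNorm_le (hN z hz) _
  · exact (N z - N z').le_of_opNorm_le_of_le (hNLip z hz z' hz') (mem_closedBall_iff_norm.mp hz')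

section Accretive

variable {X : Type*} [NormedAddCommGroup X] [InnerProductSpace ℝ X]
  {A : X →L[ℝ] X} (hA : ∀ x, 0 ≤ ⟪A x, x⟫) {α : ℝ}

include hA

theorem mul_norm_mul_norm_le_inner_add_smul (x : X) :
    α * ‖x‖ * ‖x‖ ≤ ⟪A x + α • x, x⟫ := by
  rw [inner_add_left, real_inner_smul_left, real_inner_self_eq_norm_mul_norm]
  linarith [hA x]

theorem mul_norm_le_norm_add_smul (x : X) : α * ‖x‖ ≤ ‖A x + α • x‖ := by
  rcases (norm_nonneg x).eq_or_lt with hx | hx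
  · rw [← hx, mul_zero]; exact norm_nonneg _
  exact le_of_mul_le_mul_right
    ((mul_norm_mul_norm_le_inner_add_smul hA x).trans (real_inner_le_norm _ _)) hx

theorem norm_le_norm_add_smul (hα : 0 ≤ α) (x : X) : ‖A x‖ ≤ ‖A x + α • x‖ := by
  have hcross : 0 ≤ ⟪A x, α • x⟫ := by
    rw [real_inner_smul_right]; exact mul_nonneg hα (hA x)
  refine (sq_le_sq₀ (norm_nonneg _) (norm_nonneg _)).mp ?_
  rw [norm_add_sq_real]
  nlinarith [sq_nonneg ‖α • x‖]

theorem isCoercive_innerSL_comp_add_smul (hα : 0 < α) :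
    IsCoercive ((innerSL ℝ : X →L[ℝ] X →L[ℝ] ℝ) ∘L (A + α • ContinuousLinearMap.id ℝ X)) :=
  ⟨α, hα, mul_norm_mul_norm_le_inner_add_smul hA⟩

variable [CompleteSpace X]

noncomputable def addSMulIdEquiv (hα : 0 < α) : X ≃L[ℝ] X :=
  (isCoercive_innerSL_comp_add_smul hA hα).continuousLinearEquivOfBilin

variable (hα : 0 < α)

theorem addSMulIdEquiv_apply (x : X) : addSMulIdEquiv hA hα x = A x + α • x :=
  ext_inner_right ℝ fun _ => IsCoercive.continuousLinearEquivOfBilin_apply _ _ _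

theorem norm_addSMulIdEquiv_symm_smul_le (y : X) :
    ‖(addSMulIdEquiv hA hα).symm (α • y)‖ ≤ ‖y‖ := by
  have h := mul_norm_le_norm_add_smul hA (α := α) ((addSMulIdEquiv hA hα).symm (α • y))
  rw [← addSMulIdEquiv_apply hA hα, ContinuousLinearEquiv.apply_symm_apply, norm_smul,
    Real.norm_of_nonneg hα.le] at h
  exact le_of_mul_le_mul_left h hα

theorem addSMulIdEquiv_symm_apply_comm (y : X) :
    (addSMulIdEquiv hA hα).symm (A y) = A ((addSMulIdEquiv hA hα).symm y) := by
  rw [ContinuousLinearEquiv.symm_apply_eq, addSMulIdEquiv_apply, ← map_smul, ← map_add,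
    ← addSMulIdEquiv_apply hA hα, ContinuousLinearEquiv.apply_symm_apply]

theorem norm_addSMulIdEquiv_symm_apply_le (y : X) :
    ‖(addSMulIdEquiv hA hα).symm (A y)‖ ≤ ‖y‖ := by
  have h := norm_le_norm_add_smul hA hα.le ((addSMulIdEquiv hA hα).symm y)
  rwa [← addSMulIdEquiv_apply hA hα, ContinuousLinearEquiv.apply_symm_apply,
    ← addSMulIdEquiv_symm_apply_comm] at h

theorem apply_add_smul_add_smul_eq_zero_iff (T : X →L[ℝ] X) (w v : X) :
    A (T w) + α • w + α • v = 0 ↔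
      w = (addSMulIdEquiv hA hα).symm (-(α • v) - A ((T - ContinuousLinearMap.id ℝ X) w)) := by
  have hT : A w + α • w + A ((T - ContinuousLinearMap.id ℝ X) w) = A (T w) + α • w := by
    simp only [sub_apply, ContinuousLinearMap.id_apply, map_sub]; abel
  rw [ContinuousLinearEquiv.eq_symm_apply, addSMulIdEquiv_apply, eq_sub_iff_add_eq, hT,
    add_eq_zero_iff_eq_neg]

open Metric

variable (x₀ v : X) (N : X → X →L[ℝ] X)

/-- The map `Φ` of the proof idea, with `v = x† - x̄`. -/
noncomputable def fixedPointMap (z : X) : X :=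
  x₀ + (addSMulIdEquiv hA hα).symm (-(α • v) - A (N z (z - x₀)))

variable {x₀ v N} {ρ c : ℝ} (hN : ∀ z ∈ closedBall x₀ ρ, ‖N z‖ ≤ c)
include hN

theorem mapsTo_fixedPointMap (hv : ‖v‖ ≤ (1 - c) * ρ) :
    Set.MapsTo (fixedPointMap hA hα x₀ v N) (closedBall x₀ ρ) (closedBall x₀ ρ) := by
  intro z hz
  rw [mem_closedBall_iff_norm]
  calc ‖fixedPointMap hA hα x₀ v N z - x₀‖
      = ‖(addSMulIdEquiv hA hα).symm (α • -v)
          - (addSMulIdEquiv hA hα).symm (A (N z (z - x₀)))‖ := by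
        rw [fixedPointMap, add_sub_cancel_left, map_sub, smul_neg]
    _ ≤ ‖-v‖ + ‖N z (z - x₀)‖ :=
        (norm_sub_le _ _).trans (add_le_add (norm_addSMulIdEquiv_symm_smul_le hA hα _)
          (norm_addSMulIdEquiv_symm_apply_le hA hα _))
    _ ≤ (1 - c) * ρ + c * ρ := by
        rw [norm_neg]
        exact add_le_add hv
          ((N z).le_of_opNorm_le_of_le (hN z hz) (mem_closedBall_iff_norm.mp hz))
    _ = ρ := by ring

theorem lipschitzOnWith_fixedPointMap {L : ℝ}
    (hNLip : ∀ z ∈ closedBall x₀ ρ, ∀ z' ∈ closedBall x₀ ρ, ‖N z - N z'‖ ≤ L * ‖z - z'‖) :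
    LipschitzOnWith (c + L * ρ).toNNReal (fixedPointMap hA hα x₀ v N) (closedBall x₀ ρ) := by
  refine LipschitzOnWith.of_dist_le_mul fun z hz z' hz' => ?_
  rw [dist_eq_norm, dist_eq_norm]
  calc ‖fixedPointMap hA hα x₀ v N z - fixedPointMap hA hα x₀ v N z'‖
      = ‖(addSMulIdEquiv hA hα).symm (A (N z' (z' - x₀) - N z (z - x₀)))‖ := by
        rw [fixedPointMap, fixedPointMap, add_sub_add_left_eq_sub, ← map_sub,
          sub_sub_sub_cancel_left, ← map_sub]
    _ ≤ ‖N z (z - x₀) - N z' (z' - x₀)‖ :=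
        (norm_addSMulIdEquiv_symm_apply_le hA hα _).trans_eq (norm_sub_rev _ _)
    _ ≤ (c + L * ρ) * ‖z - z'‖ := norm_apply_sub_sub_apply_sub_le hN hNLip hz hz'
    _ ≤ (c + L * ρ).toNNReal * ‖z - z'‖ :=
        mul_le_mul_of_nonneg_right (Real.le_coe_toNNReal _) (norm_nonneg _)

end Accretive

open Metric Function in
theorem stmt_17_general {X : Type*} [NormedAddCommGroup X] [InnerProductSpace ℝ X] [CompleteSpace X]
    (A : X →L[ℝ] X) (hacc : ∀ x : X, 0 ≤ ⟪A x, x⟫)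
    (α ρ : ℝ) (hα : 0 < α) (hρ : 0 < ρ)
    (xdag xbar : X) (M : X → (X →L[ℝ] X))
    (c L_M : ℝ)
    (hM : ∀ z ∈ Metric.closedBall xdag ρ, ‖M z - ContinuousLinearMap.id ℝ X‖ ≤ c)
    (hMLip : ∀ z ∈ Metric.closedBall xdag ρ, ∀ z' ∈ Metric.closedBall xdag ρ,
      ‖M z - M z'‖ ≤ L_M * ‖z - z'‖)
    (hxbar : ‖xbar - xdag‖ ≤ (1 - c) * ρ)
    (hsmall : c + L_M * ρ < 1) :
    ∃! z : X, z ∈ Metric.closedBall xdag ρ ∧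
      A ((M z) (z - xdag)) + α • (z - xdag) + α • (xdag - xbar) = 0 := by
  set N : X → X →L[ℝ] X := fun z => M z - ContinuousLinearMap.id ℝ X
  have hNLip : ∀ z ∈ closedBall xdag ρ, ∀ z' ∈ closedBall xdag ρ,
      ‖N z - N z'‖ ≤ L_M * ‖z - z'‖ := fun z hz z' hz' => by
    simpa only [N, sub_sub_sub_cancel_right] using hMLip z hz z' hz'
  have hfix := existsUnique_isFixedPt_of_lipschitzOnWith isClosed_closedBall.isComplete
    ⟨xdag, mem_closedBall_self hρ.le⟩
    (mapsTo_fixedPointMap hacc hα hM (by rwa [norm_sub_rev]))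
    (Real.toNNReal_lt_one.mpr hsmall) (lipschitzOnWith_fixedPointMap hacc hα hM hNLip)
  refine (existsUnique_congr fun z => and_congr_right' ?_).mpr hfix
  rw [apply_add_smul_add_smul_eq_zero_iff hacc hα, IsFixedPt, fixedPointMap,
    sub_eq_iff_eq_add', eq_comm]

/-- Existence and uniqueness (via Banach's fixed point theorem) of the intermediate
quantity z in the closed ball B̄_ρ(x†) solving (A M(z) + αI)(z − x†) + α(x† − x̄) = 0. -/
theorem stmt_17 {X : Type*} [NormedAddCommGroup X] [InnerProductSpace ℝ X] [CompleteSpace X]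
    (A : X →L[ℝ] X) (hacc : ∀ x : X, 0 ≤ ⟪A x, x⟫)
    (α ρ : ℝ) (hα : 0 < α) (hρ : 0 < ρ)
    (xdag xbar : X) (M : X → (X →L[ℝ] X))
    (c L_M : ℝ) (hc0 : 0 ≤ c) (hc1 : c < 1)
    (hM : ∀ z ∈ Metric.closedBall xdag ρ, ‖M z - ContinuousLinearMap.id ℝ X‖ ≤ c)
    (hMLip : ∀ z ∈ Metric.closedBall xdag ρ, ∀ z' ∈ Metric.closedBall xdag ρ,
      ‖M z - M z'‖ ≤ L_M * ‖z - z'‖)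
    (hxbar : ‖xbar - xdag‖ ≤ (1 - c) * ρ)
    (hsmall : c + L_M * ρ < 1) :
    ∃! z : X, z ∈ Metric.closedBall xdag ρ ∧
      A ((M z) (z - xdag)) + α • (z - xdag) + α • (xdag - xbar) = 0 :=
  stmt_17_general A hacc α ρ hα hρ xdag xbar M c L_M hM hMLip hxbar hsmall
end

section
/- Let X be a real Hilbert space, F : X → X, and let x†, x̄, y, yδ ∈ X with F(x†) = y and ‖y − yδ‖ ≤ δ for some δ > 0. Let α > 0 and let xαδ ∈ X satisfy F(xαδ) + α(xαδ − x̄) = yδ, where F is monotone. Let A, M₀ : X → X be bounded linear operators and z ∈ X satisfy (A M₀ + αI)(z − x†) + α(x† − x̄) = 0, and suppose F(z) − F(x†) = A M₀ (z − x†) + N₀ for some N₀ ∈ X with ‖N₀‖ ≤ σ₀. Then ‖xαδ − z‖ ≤ δ/α + σ₀/α. -/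
open RealInnerProductSpace

/-- Estimate (estxz) comparing the Lavrentiev regularized solution x_α^δ with the
intermediate quantity z solving (A M₀ + αI)(z − x†) + α(x† − x̄) = 0, under the
range invariance condition F(z) − F(x†) = A M₀(z − x†) + N₀ with ‖N₀‖ ≤ σ₀:
‖x_α^δ − z‖ ≤ δ/α + σ₀/α. -/
theorem stmt_18 {X : Type*} [NormedAddCommGroup X] [InnerProductSpace ℝ X] [CompleteSpace X]
    (F : X → X) (hmono : ∀ x x' : X, 0 ≤ ⟪F x - F x', x - x'⟫)
    (y yδ xbar xdag xad : X) (δ α : ℝ) (hδ : 0 < δ) (hα : 0 < α)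
    (hsol : F xdag = y) (hnoise : ‖y - yδ‖ ≤ δ)
    (hlav : F xad + α • (xad - xbar) = yδ)
    (A M₀ : X →L[ℝ] X) (z N₀ : X) (σ₀ : ℝ)
    (hz : A (M₀ (z - xdag)) + α • (z - xdag) + α • (xdag - xbar) = 0)
    (hrange : F z - F xdag = A (M₀ (z - xdag)) + N₀)
    (hN : ‖N₀‖ ≤ σ₀) :
    ‖xad - z‖ ≤ δ / α + σ₀ / α := by
  set e := xad - z with he
  -- z equation: F z + α • (z - xbar) = y + N₀
  have hzeq : F z + α • (z - xbar) = y + N₀ := by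
    have h1 : A (M₀ (z - xdag)) = -(α • (z - xdag)) - α • (xdag - xbar) := by
      have := hz; abel_nf at this ⊢; linear_combination (norm := abel_nf) this
    have := hrange
    rw [h1, hsol] at this
    have : F z = y + N₀ - α • (z - xdag) - α • (xdag - xbar) := by
      linear_combination (norm := abel_nf) this
    rw [this, smul_sub, smul_sub, smul_sub]
    abel
  have hkey : F xad - F z + α • e = (yδ - y) - N₀ := by
    have := hlav
    have h2 : F xad = yδ - α • (xad - xbar) := by linear_combination (norm := abel_nf) hlav
    have h3 : F z = y + N₀ - α • (z - xbar) := by linear_combination (norm := abel_nf) hzeq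
    rw [h2, h3, he, smul_sub, smul_sub, smul_sub]
    abel
  have hmon := hmono xad z
  have hcs : ⟪(yδ - y) - N₀, e⟫ ≤ (δ + σ₀) * ‖e‖ := by
    calc ⟪(yδ - y) - N₀, e⟫ ≤ ‖(yδ - y) - N₀‖ * ‖e‖ := real_inner_le_norm _ _
    _ ≤ (δ + σ₀) * ‖e‖ := by
        apply mul_le_mul_of_nonneg_right _ (norm_nonneg _)
        calc ‖(yδ - y) - N₀‖ ≤ ‖yδ - y‖ + ‖N₀‖ := norm_sub_le _ _
        _ ≤ δ + σ₀ := add_le_add (by rwa [norm_sub_rev]) hN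
  have hineq : α * ‖e‖ ^ 2 ≤ (δ + σ₀) * ‖e‖ := by
    have h4 : ⟪F xad - F z + α • e, e⟫ = ⟪F xad - F z, e⟫ + α * ‖e‖ ^ 2 := by
      rw [inner_add_left, real_inner_smul_left, real_inner_self_eq_norm_sq]
    have : α * ‖e‖ ^ 2 ≤ ⟪(yδ - y) - N₀, e⟫ := by
      rw [← hkey, h4]; linarith
    linarith
  rcases eq_or_lt_of_le (norm_nonneg e) with h0 | h0
  · have hσ : 0 ≤ σ₀ := le_trans (norm_nonneg _) hN
    rw [← h0]; positivity
  · have h5 : α * ‖e‖ ≤ δ + σ₀ := by nlinarith [sq_abs ‖e‖]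
    rw [← add_div, le_div_iff₀ hα]; linarith
end

section
/- Let A : L²(0,1) → L²(0,1) be the Volterra integration operator defined by (Ax)(s) = ∫₀^s x(t) dt for s ∈ [0,1]. Then for every x ∈ L²(0,1) one has ⟨Ax, x⟩ = (1/2)(∫₀¹ x(t) dt)². Consequently, A is accretive (⟨Ax, x⟩ ≥ 0 for all x), and for the constant function x† ≡ 1 the Lavrentiev-type variational source condition ⟨x†, x⟩ ≤ √2 · ⟨Ax, x⟩^{1/2} holds for all x ∈ L²(0,1). -/
/-!
`⟨Ax, x⟩ = ∫ x(s) ∫_{t ≤ s} x(t) dt ds` is the integral of `x(s) x(t)` over the triangle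
`t ≤ s`. The opposite triangle `s < t` has the same integral by the symmetry `(s, t) ↦ (t, s)`
(the diagonal being null, `<` and `≤` may be interchanged), and the two triangles together give
`(∫ x)²`. Hence `⟨Ax, x⟩ = ½ (∫ x)² ≥ 0`, and
`⟨1, x⟩ = ∫ x ≤ |∫ x| = √2 · √(½ (∫ x)²)`.
-/

open MeasureTheory RealInnerProductSpace Set

namespace MeasureTheory

theorem setIntegral_prod_mul_eq_integral_mul_setIntegral {α β : Type*} [MeasurableSpace α]
    [MeasurableSpace β] {μ : Measure α} {ν : Measure β} [SFinite μ] [SFinite ν]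
    {f : α → ℝ} {g : β → ℝ}
    (hf : Integrable f μ) (hg : Integrable g ν) {S : Set (α × β)} (hS : MeasurableSet S) :
    ∫ p in S, f p.1 * g p.2 ∂(μ.prod ν) = ∫ s, f s * ∫ t in Prod.mk s ⁻¹' S, g t ∂ν ∂μ := by
  rw [← integral_indicator hS, integral_prod _ ((hf.mul_prod hg).indicator hS)]
  congr 1 with s
  rw [← integral_const_mul, ← integral_indicator (measurable_prodMk_left hS)]
  rfl

section Triangle

variable {α : Type*} [MeasurableSpace α] [TopologicalSpace α] [LinearOrder α]
  [OrderClosedTopology α] [SecondCountableTopology α] [OpensMeasurableSpace α]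
  {μ : Measure α} [SFinite μ] {f : α → ℝ}

theorem setIntegral_prod_mul_lt_comm :
    ∫ p in {p : α × α | p.1 < p.2}, f p.1 * f p.2 ∂(μ.prod μ) =
      ∫ p in {p : α × α | p.2 < p.1}, f p.1 * f p.2 ∂(μ.prod μ) := by
  rw [← integral_indicator measurableSet_lt',
    ← integral_indicator (measurableSet_lt measurable_snd measurable_fst), ← integral_prod_swap]
  congr 1
  funext p
  simp only [indicator, mem_ofPred_eq, Prod.fst_swap, Prod.snd_swap, mul_comm]

theorem integral_mul_setIntegral_Iic_eq_half_sq [NullSingletonClass μ] (hf : Integrable f μ) :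
    ∫ s, f s * ∫ t in Iic s, f t ∂μ ∂μ = (∫ t, f t ∂μ) ^ 2 / 2 := by
  have hle : MeasurableSet {p : α × α | p.2 ≤ p.1} := measurableSet_le measurable_snd measurable_fst
  have hlt : MeasurableSet {p : α × α | p.2 < p.1} := measurableSet_lt measurable_snd measurable_fst
  have hcompl : {p : α × α | p.2 ≤ p.1}ᶜ = {p | p.1 < p.2} := by ext p; simp
  have hsplit := integral_add_compl hle (hf.mul_prod hf)
  rw [integral_prod_mul, hcompl, setIntegral_prod_mul_lt_comm,
    setIntegral_prod_mul_eq_integral_mul_setIntegral hf hf hle,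
    setIntegral_prod_mul_eq_integral_mul_setIntegral hf hf hlt] at hsplit
  change ∫ s, f s * ∫ t in Iic s, f t ∂μ ∂μ + ∫ s, f s * ∫ t in Iio s, f t ∂μ ∂μ = _ at hsplit
  simp only [← integral_Iic_eq_integral_Iio] at hsplit
  linarith

end Triangle

theorem Measure.restrict_Ioc_restrict_Ioc_eq_restrict_Iic {α : Type*} [TopologicalSpace α]
    [MeasurableSpace α] [OpensMeasurableSpace α] [LinearOrder α] [OrderClosedTopology α]
    (μ : Measure α) (a b s : α) :
    (μ.restrict (Ioc a b)).restrict (Ioc a s) = (μ.restrict (Ioc a b)).restrict (Iic s) := by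
  rw [Measure.restrict_restrict measurableSet_Ioc, Measure.restrict_restrict measurableSet_Iic]
  congr 1 with t
  simp only [mem_inter_iff, mem_Ioc, mem_Iic]
  tauto

theorem L2.inner_eq_integral_of_ae_eq_one {α : Type*} [MeasurableSpace α] {μ : Measure α}
    {e : Lp ℝ 2 μ} (he : (e : α → ℝ) =ᵐ[μ] fun _ => 1) (x : Lp ℝ 2 μ) :
    ⟪e, x⟫ = ∫ t, (x : α → ℝ) t ∂μ := by
  rw [L2.inner_def]
  refine integral_congr_ae ?_
  filter_upwards [he] with t ht
  rw [ht, RCLike.inner_apply, RCLike.conj_to_real, mul_one]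

section Volterra

variable {α : Type*} [MeasurableSpace α] [TopologicalSpace α] [LinearOrder α]
  [OrderClosedTopology α] [SecondCountableTopology α] [OpensMeasurableSpace α]
  {μ : Measure α} [IsFiniteMeasure μ] [NullSingletonClass μ]

theorem L2.inner_volterra_eq_half_sq {x y : Lp ℝ 2 μ}
    (hy : ∀ᵐ s ∂μ, (y : α → ℝ) s = ∫ t in Iic s, (x : α → ℝ) t ∂μ) :
    ⟪y, x⟫ = 1 / 2 * (∫ t, (x : α → ℝ) t ∂μ) ^ 2 := by
  rw [one_div_mul_eq_div, L2.inner_def,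
    ← integral_mul_setIntegral_Iic_eq_half_sq ((Lp.memLp x).integrable one_le_two)]
  refine integral_congr_ae ?_
  filter_upwards [hy] with s hs
  rw [hs, RCLike.inner_apply, RCLike.conj_to_real]

end Volterra

end MeasureTheory

/-- For the Volterra integration operator A on L²(0,1), one has
⟨Ax, x⟩ = ½(∫₀¹ x)², hence A is accretive, and the constant function x† ≡ 1 satisfies
the Lavrentiev-type variational source condition ⟨x†, x⟩ ≤ √2 ⟨Ax, x⟩^{1/2}. -/
theorem stmt_19
    (μ : Measure ℝ) (hμ : μ = volume.restrict (Set.Ioc (0:ℝ) 1))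
    (A : Lp ℝ 2 μ →L[ℝ] Lp ℝ 2 μ)
    (hA : ∀ x : Lp ℝ 2 μ, ∀ᵐ s ∂μ,
      (A x : ℝ → ℝ) s = ∫ t in Set.Ioc (0:ℝ) s, (x : ℝ → ℝ) t ∂μ)
    (xdag : Lp ℝ 2 μ) (hxdag : (xdag : ℝ → ℝ) =ᵐ[μ] fun _ => 1) :
    (∀ x : Lp ℝ 2 μ, ⟪A x, x⟫ = (1 / 2) * (∫ t, (x : ℝ → ℝ) t ∂μ) ^ 2) ∧
    (∀ x : Lp ℝ 2 μ, 0 ≤ ⟪A x, x⟫) ∧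
    (∀ x : Lp ℝ 2 μ, ⟪xdag, x⟫ ≤ Real.sqrt 2 * Real.sqrt ⟪A x, x⟫) := by
  have : IsFiniteMeasure μ := hμ ▸ inferInstance
  have : NullSingletonClass μ := hμ ▸ inferInstance
  have hIoc (s : ℝ) : μ.restrict (Ioc 0 s) = μ.restrict (Iic s) :=
    hμ ▸ Measure.restrict_Ioc_restrict_Ioc_eq_restrict_Iic volume 0 1 s
  have hinner (x : Lp ℝ 2 μ) : ⟪A x, x⟫ = 1 / 2 * (∫ t, (x : ℝ → ℝ) t ∂μ) ^ 2 :=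
    L2.inner_volterra_eq_half_sq (by simpa only [hIoc] using hA x)
  refine ⟨hinner, fun x => by rw [hinner]; positivity, fun x => ?_⟩
  set I := ∫ t, (x : ℝ → ℝ) t ∂μ
  calc ⟪xdag, x⟫ = I := L2.inner_eq_integral_of_ae_eq_one hxdag x
    _ ≤ |I| := le_abs_self I
    _ = Real.sqrt 2 * Real.sqrt ⟪A x, x⟫ := by
      rw [hinner, ← Real.sqrt_mul zero_le_two, ← Real.sqrt_sq_eq_abs]
      congr 1
      ring
end
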